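/- arXiv:1006.0522 — 9 statements merged into one kernel-verified Lean document; each statement's English description precedes it below -/
import Mathlib

section
/- Let p, q, r be integers with p, q, r ≥ 3 that are relatively prime in pairs. Then Q_{p,q,r} is self-reciprocal: writing φ = (p−1)(q−1)(r−1) for its degree and a_m for its coefficients, one has a_m = a_{φ−m} for all 0 ≤ m ≤ φ. -/
open Polynomial

/-- Denominator `(X^{pq}-1)(X^{qr}-1)(X^{rp}-1)(X-1)` of the ternary
inclusion-exclusion polynomial. -/
noncomputable def incexcD (p q r : ℕ) : Polynomial ℤ :=
  (X ^ (p * q) - 1) * (X ^ (q * r) - 1) * (X ^ (r * p) - 1) * (X - 1)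

/-- Numerator `(X^{pqr}-1)(X^p-1)(X^q-1)(X^r-1)` of the ternary
inclusion-exclusion polynomial. -/
noncomputable def incexcN (p q r : ℕ) : Polynomial ℤ :=
  (X ^ (p * q * r) - 1) * (X ^ p - 1) * (X ^ q - 1) * (X ^ r - 1)

lemma XpowSubOne_ne_zero (n : ℕ) (hn : 1 ≤ n) : (X ^ n - 1 : Polynomial ℤ) ≠ 0 := by
  intro h
  have := natDegree_X_pow_sub_C (n := n) (r := (1 : ℤ))
  rw [map_one, h] at this
  simp at this
  omega

lemma natDeg_XpowSubOne (n : ℕ) : (X ^ n - 1 : Polynomial ℤ).natDegree = n := by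
  have := natDegree_X_pow_sub_C (n := n) (r := (1 : ℤ))
  rwa [map_one] at this

lemma reverse_XpowSubOne (n : ℕ) (hn : 1 ≤ n) :
    (X ^ n - 1 : Polynomial ℤ).reverse = -(X ^ n - 1) := by
  rw [reverse, natDeg_XpowSubOne, reflect_sub, reflect_monomial, ← map_one (C : ℤ →+* _),
    reflect_C, revAt_le (le_refl n), Nat.sub_self, map_one, pow_zero, one_mul]
  ring

theorem stmt_2 (p q r : ℕ) (hp : 3 ≤ p) (hq : 3 ≤ q) (hr : 3 ≤ r)
    (hpq : Nat.Coprime p q) (hqr : Nat.Coprime q r) (hrp : Nat.Coprime r p)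
    (Q : Polynomial ℤ) (hQ : Q * incexcD p q r = incexcN p q r)
    (m : ℕ) (hm : m ≤ (p - 1) * (q - 1) * (r - 1)) :
    Q.coeff m = Q.coeff ((p - 1) * (q - 1) * (r - 1) - m) := by
  have hp1 : 1 ≤ p := by omega
  have hq1 : 1 ≤ q := by omega
  have hr1 : 1 ≤ r := by omega
  have hpq1 : 1 ≤ p * q := Nat.one_le_iff_ne_zero.2 (by positivity)
  have hqr1 : 1 ≤ q * r := Nat.one_le_iff_ne_zero.2 (by positivity)
  have hrp1 : 1 ≤ r * p := Nat.one_le_iff_ne_zero.2 (by positivity)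
  have hpqr1 : 1 ≤ p * q * r := Nat.one_le_iff_ne_zero.2 (by positivity)
  have hDne : incexcD p q r ≠ 0 := by
    unfold incexcD
    exact mul_ne_zero (mul_ne_zero (mul_ne_zero (XpowSubOne_ne_zero _ hpq1)
      (XpowSubOne_ne_zero _ hqr1)) (XpowSubOne_ne_zero _ hrp1))
      (by simpa using XpowSubOne_ne_zero 1 le_rfl)
  have hNne : incexcN p q r ≠ 0 := by
    unfold incexcN
    exact mul_ne_zero (mul_ne_zero (mul_ne_zero (XpowSubOne_ne_zero _ hpqr1)
      (XpowSubOne_ne_zero _ hp1)) (XpowSubOne_ne_zero _ hq1)) (XpowSubOne_ne_zero _ hr1)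
  have hQne : Q ≠ 0 := by
    intro h; rw [h, zero_mul] at hQ; exact hNne hQ.symm
  -- reverse of D and N
  have hrevD : (incexcD p q r).reverse = incexcD p q r := by
    unfold incexcD
    rw [reverse_mul_of_domain, reverse_mul_of_domain, reverse_mul_of_domain,
      reverse_XpowSubOne _ hpq1, reverse_XpowSubOne _ hqr1, reverse_XpowSubOne _ hrp1]
    have : (X - 1 : Polynomial ℤ).reverse = -(X - 1) := by
      simpa using reverse_XpowSubOne 1 le_rfl
    rw [this]; ring
  have hrevN : (incexcN p q r).reverse = incexcN p q r := by
    unfold incexcN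
    rw [reverse_mul_of_domain, reverse_mul_of_domain, reverse_mul_of_domain,
      reverse_XpowSubOne _ hpqr1, reverse_XpowSubOne _ hp1, reverse_XpowSubOne _ hq1,
      reverse_XpowSubOne _ hr1]
    ring
  have hrevQ : Q.reverse = Q := by
    have h1 : Q.reverse * (incexcD p q r).reverse = (incexcN p q r).reverse := by
      rw [← reverse_mul_of_domain, hQ]
    rw [hrevD, hrevN, ← hQ] at h1
    exact mul_right_cancel₀ hDne h1
  -- degree computation
  have hdegD : (incexcD p q r).natDegree = p * q + q * r + r * p + 1 := by
    unfold incexcD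
    rw [natDegree_mul (by exact mul_ne_zero (mul_ne_zero (XpowSubOne_ne_zero _ hpq1)
        (XpowSubOne_ne_zero _ hqr1)) (XpowSubOne_ne_zero _ hrp1))
        (by simpa using XpowSubOne_ne_zero 1 le_rfl),
      natDegree_mul (mul_ne_zero (XpowSubOne_ne_zero _ hpq1) (XpowSubOne_ne_zero _ hqr1))
        (XpowSubOne_ne_zero _ hrp1),
      natDegree_mul (XpowSubOne_ne_zero _ hpq1) (XpowSubOne_ne_zero _ hqr1),
      natDeg_XpowSubOne, natDeg_XpowSubOne, natDeg_XpowSubOne]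
    have : (X - 1 : Polynomial ℤ).natDegree = 1 := by
      simpa using natDeg_XpowSubOne 1
    rw [this]
  have hdegN : (incexcN p q r).natDegree = p * q * r + p + q + r := by
    unfold incexcN
    rw [natDegree_mul (mul_ne_zero (mul_ne_zero (XpowSubOne_ne_zero _ hpqr1)
        (XpowSubOne_ne_zero _ hp1)) (XpowSubOne_ne_zero _ hq1)) (XpowSubOne_ne_zero _ hr1),
      natDegree_mul (mul_ne_zero (XpowSubOne_ne_zero _ hpqr1) (XpowSubOne_ne_zero _ hp1))
        (XpowSubOne_ne_zero _ hq1),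
      natDegree_mul (XpowSubOne_ne_zero _ hpqr1) (XpowSubOne_ne_zero _ hp1),
      natDeg_XpowSubOne, natDeg_XpowSubOne, natDeg_XpowSubOne, natDeg_XpowSubOne]
  have hdegQ : Q.natDegree = (p - 1) * (q - 1) * (r - 1) := by
    have h1 : Q.natDegree + (incexcD p q r).natDegree = (incexcN p q r).natDegree := by
      rw [← hQ, natDegree_mul hQne hDne]
    rw [hdegD, hdegN] at h1
    have key : (p - 1) * (q - 1) * (r - 1) + (p * q + q * r + r * p + 1)
        = p * q * r + p + q + r := by
      obtain ⟨a, rfl⟩ : ∃ a, p = a + 1 := ⟨p - 1, by omega⟩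
      obtain ⟨b, rfl⟩ : ∃ b, q = b + 1 := ⟨q - 1, by omega⟩
      obtain ⟨c, rfl⟩ : ∃ c, r = c + 1 := ⟨r - 1, by omega⟩
      simp only [Nat.add_sub_cancel]
      ring
    omega
  calc Q.coeff m = Q.reverse.coeff m := by rw [hrevQ]
    _ = Q.coeff ((p - 1) * (q - 1) * (r - 1) - m) := by
        rw [coeff_reverse, hdegQ, revAt_le (by omega)]
end

section
/- (Lemma 1.) Let p, q, r be integers with p, q, r ≥ 3 that are relatively prime in pairs. For every integer m with m < pqr, the coefficient a_m of Q_{p,q,r} satisfies a_m = Σ_{m−p < n ≤ m} ( χ(n) − χ(n−q) − χ(n−r) + χ(n−q−r) ), where χ = χ_{p,q,r} and a_m is interpreted as 0 for m < 0 and m > (p−1)(q−1)(r−1). -/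
open Polynomial Classical

/-- The coefficient of a polynomial at an integer index, interpreted as `0`
for negative indices (and automatically `0` beyond the degree). -/
noncomputable def coeffZ (Q : Polynomial ℤ) (m : ℤ) : ℤ :=
  if 0 ≤ m then Q.coeff m.toNat else 0

/-- `chi p q r n = 1` if `n` is `{p,q,r}`-representable, i.e. if in the unique
representation `n = x·qr + y·rp + z·pq + δ·pqr` with `0 ≤ x < p`, `0 ≤ y < q`,
`0 ≤ z < r`, the integer `δ` is nonnegative; `chi p q r n = 0` otherwise. -/
noncomputable def chi (p q r : ℕ) (n : ℤ) : ℤ :=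
  if ∃ x y z δ : ℤ, 0 ≤ x ∧ x < p ∧ 0 ≤ y ∧ y < q ∧ 0 ≤ z ∧ z < r ∧ 0 ≤ δ ∧
      n = x * q * r + y * r * p + z * p * q + δ * p * q * r
  then 1 else 0

/-!
Since representations are unique, the coefficient of `Xⁿ` in `A · (1 - X^(pqr))`, where
`A = ∑ χ(n) Xⁿ`, is `χ(n) - χ(n - pqr) = [δₙ = 0]`, i.e. the number of triples `(x, y, z)` in the
box with `n = x·qr + y·rp + z·pq`. Hence `A · (1 - X^(pqr))` is a product of three geometric sums
and `A · (1 - X^(qr)) (1 - X^(rp)) (1 - X^(pq)) = (1 - X^(pqr))²`. Multiplying `Q · D = N` by this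
and cancelling gives `Q · (1 - X^(pqr)) = A · (1 - X^q) (1 - X^r) (1 + X + ⋯ + X^(p-1))`, whose
coefficients below `pqr` are those of `Q`.
-/

structure IsRep (p q r : ℕ) (n : ℤ) (x y z : ℕ) (δ : ℤ) : Prop where
  x_lt : x < p
  y_lt : y < q
  z_lt : z < r
  eq : n = x * q * r + y * r * p + z * p * q + δ * p * q * r

lemma Int.exists_natCast_add_mul {p : ℕ} (hp : 0 < p) (a : ℤ) :
    ∃ x : ℕ, x < p ∧ ∃ k : ℤ, a = x + p * k := by
  have h₀ := Int.emod_nonneg a (by omega : (p : ℤ) ≠ 0)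
  have h₁ := Int.emod_lt_of_pos a (by omega : (0 : ℤ) < p)
  refine ⟨(a % p).toNat, by omega, a / p, ?_⟩
  rw [Int.toNat_of_nonneg h₀, Int.emod_add_mul_ediv]

lemma Nat.eq_of_isCoprime_dvd_mul_sub {a x x' : ℕ} {b : ℤ} (hab : IsCoprime (a : ℤ) b)
    (hx : x < a) (hx' : x' < a) (h : (a : ℤ) ∣ b * (x' - x)) : x = x' :=
  (Nat.modEq_iff_dvd.mpr (hab.dvd_of_dvd_mul_left h)).eq_of_lt_of_lt hx hx'

section Representation

variable {p q r : ℕ}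

/-- From `1 = u·qr + v·p` and `1 = s·r + t·q` we get `n` as a combination of `qr`, `rp`, `pq`;
reducing the three coefficients modulo `p`, `q`, `r` leaves a multiple of `pqr`. -/
lemma exists_isRep (hp : 0 < p) (hq : 0 < q) (hr : 0 < r)
    (hpq : p.Coprime q) (hqr : q.Coprime r) (hrp : r.Coprime p) (n : ℤ) :
    ∃ x y z δ, IsRep p q r n x y z δ := by
  have cpq : IsCoprime (p : ℤ) q := Nat.isCoprime_iff_coprime.mpr hpq
  have cqr : IsCoprime (q : ℤ) r := Nat.isCoprime_iff_coprime.mpr hqr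
  have crp : IsCoprime (r : ℤ) p := Nat.isCoprime_iff_coprime.mpr hrp
  obtain ⟨u, v, huv⟩ := cpq.symm.mul_left crp
  obtain ⟨s, t, hst⟩ := cqr.symm
  obtain ⟨x, hx, k, hk⟩ := Int.exists_natCast_add_mul hp (n * u)
  obtain ⟨y, hy, l, hl⟩ := Int.exists_natCast_add_mul hq (n * v * s)
  obtain ⟨z, hz, m, hm⟩ := Int.exists_natCast_add_mul hr (n * v * t)
  refine ⟨x, y, z, k + l + m, hx, hy, hz, ?_⟩
  linear_combination (-n) * huv - n * v * p * hst + q * r * hk + r * p * hl + p * q * hm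

lemma IsRep.unique (hpq : p.Coprime q) (hqr : q.Coprime r) (hrp : r.Coprime p)
    {n δ δ' : ℤ} {x y z x' y' z' : ℕ}
    (h : IsRep p q r n x y z δ) (h' : IsRep p q r n x' y' z' δ') :
    x = x' ∧ y = y' ∧ z = z' ∧ δ = δ' := by
  have cpq : IsCoprime (p : ℤ) q := Nat.isCoprime_iff_coprime.mpr hpq
  have cqr : IsCoprime (q : ℤ) r := Nat.isCoprime_iff_coprime.mpr hqr
  have crp : IsCoprime (r : ℤ) p := Nat.isCoprime_iff_coprime.mpr hrp
  have he := h.eq.symm.trans h'.eq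
  have hx : x = x' := Nat.eq_of_isCoprime_dvd_mul_sub (cpq.mul_right crp.symm) h.x_lt h'.x_lt
    ⟨(y - y') * r + (z - z') * q + (δ - δ') * q * r, by linear_combination -he⟩
  have hy : y = y' := Nat.eq_of_isCoprime_dvd_mul_sub (cqr.mul_right cpq.symm) h.y_lt h'.y_lt
    ⟨(x - x') * r + (z - z') * p + (δ - δ') * r * p, by linear_combination -he⟩
  have hz : z = z' := Nat.eq_of_isCoprime_dvd_mul_sub (crp.mul_right cqr.symm) h.z_lt h'.z_lt
    ⟨(x - x') * q + (y - y') * p + (δ - δ') * p * q, by linear_combination -he⟩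
  subst hx hy hz
  have hpqr : (p * q * r : ℤ) ≠ 0 := by
    have := h.x_lt; have := h.y_lt; have := h.z_lt
    exact mul_ne_zero (mul_ne_zero (by omega) (by omega)) (by omega)
  exact ⟨rfl, rfl, rfl, mul_right_cancel₀ hpqr (by linear_combination he)⟩

lemma chi_of_neg {n : ℤ} (hn : n < 0) : chi p q r n = 0 := by
  rw [chi, if_neg]
  rintro ⟨x, y, z, δ, hx, -, hy, -, hz, -, hδ, rfl⟩
  lift x to ℕ using hx
  lift y to ℕ using hy
  lift z to ℕ using hz
  lift δ to ℕ using hδ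
  exact hn.not_ge (by positivity)

lemma chi_eq_of_isRep (hpq : p.Coprime q) (hqr : q.Coprime r) (hrp : r.Coprime p)
    {n δ : ℤ} {x y z : ℕ} (h : IsRep p q r n x y z δ) :
    chi p q r n = if 0 ≤ δ then 1 else 0 := by
  refine if_congr ⟨?_, fun hδ => ⟨x, y, z, δ, by positivity, mod_cast h.x_lt, by positivity,
    mod_cast h.y_lt, by positivity, mod_cast h.z_lt, hδ, h.eq⟩⟩ rfl rfl
  rintro ⟨x', y', z', δ', hx', hxp, hy', hyq, hz', hzr, hδ', he⟩
  lift x' to ℕ using hx'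
  lift y' to ℕ using hy'
  lift z' to ℕ using hz'
  obtain ⟨-, -, -, rfl⟩ :=
    h.unique hpq hqr hrp ⟨mod_cast hxp, mod_cast hyq, mod_cast hzr, he⟩
  exact hδ'

lemma chi_sub_chi_sub_mul (hp : 0 < p) (hq : 0 < q) (hr : 0 < r)
    (hpq : p.Coprime q) (hqr : q.Coprime r) (hrp : r.Coprime p) (n : ℕ) :
    chi p q r n - chi p q r (n - p * q * r) =
      ∑ z ∈ Finset.range r, ∑ y ∈ Finset.range q, ∑ x ∈ Finset.range p,
        if n = q * r * x + r * p * y + p * q * z then 1 else 0 := by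
  obtain ⟨x₀, y₀, z₀, δ, h⟩ := exists_isRep hp hq hr hpq hqr hrp n
  have h' : IsRep p q r (n - p * q * r) x₀ y₀ z₀ (δ - 1) :=
    ⟨h.x_lt, h.y_lt, h.z_lt, by linear_combination h.eq⟩
  have hterm : ∀ x < p, ∀ y < q, ∀ z < r,
      (n = q * r * x + r * p * y + p * q * z ↔ x = x₀ ∧ y = y₀ ∧ z = z₀ ∧ δ = 0) := by
    intro x hx y hy z hz
    constructor
    · intro he
      have h₀ : IsRep p q r n x y z 0 := ⟨hx, hy, hz, by rw [he]; push_cast; ring⟩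
      obtain ⟨rfl, rfl, rfl, rfl⟩ := h.unique hpq hqr hrp h₀
      simp
    · rintro ⟨rfl, rfl, rfl, rfl⟩
      zify
      linear_combination h.eq
  rw [chi_eq_of_isRep hpq hqr hrp h, chi_eq_of_isRep hpq hqr hrp h',
    Finset.sum_congr rfl fun z hz => Finset.sum_congr rfl fun y hy => Finset.sum_congr rfl
      fun x hx => if_congr (hterm x (Finset.mem_range.mp hx) y (Finset.mem_range.mp hy) z
        (Finset.mem_range.mp hz)) rfl rfl]
  simp only [ite_and, Finset.sum_ite_eq', Finset.mem_range, h.x_lt, h.y_lt, h.z_lt, if_true]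
  split_ifs <;> omega

end Representation

local notation "T" => (PowerSeries.X : PowerSeries ℤ)

noncomputable def chiSeries (p q r : ℕ) : PowerSeries ℤ :=
  PowerSeries.mk fun n => chi p q r n

section Series

variable {p q r : ℕ}

lemma coeff_chiSeries_mul_X_pow (k n : ℕ) :
    PowerSeries.coeff n (chiSeries p q r * T ^ k) = chi p q r ((n : ℤ) - k) := by
  rw [PowerSeries.coeff_mul_X_pow']
  split_ifs with h
  · rw [chiSeries, PowerSeries.coeff_mk, Nat.cast_sub h]
  · exact (chi_of_neg (by omega)).symm

lemma chiSeries_mul_one_sub_X_pow (hp : 0 < p) (hq : 0 < q) (hr : 0 < r)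
    (hpq : p.Coprime q) (hqr : q.Coprime r) (hrp : r.Coprime p) :
    chiSeries p q r * (1 - T ^ (p * q * r)) =
      (∑ x ∈ Finset.range p, (T ^ (q * r)) ^ x) * (∑ y ∈ Finset.range q, (T ^ (r * p)) ^ y) *
        ∑ z ∈ Finset.range r, (T ^ (p * q)) ^ z := by
  ext n
  have hlhs : PowerSeries.coeff n (chiSeries p q r * (1 - T ^ (p * q * r))) =
      chi p q r n - chi p q r (n - p * q * r) := by
    rw [mul_sub, map_sub, ← pow_zero T, coeff_chiSeries_mul_X_pow, coeff_chiSeries_mul_X_pow]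
    push_cast
    rw [sub_zero]
  rw [hlhs]
  simp only [Finset.sum_mul, Finset.mul_sum, ← pow_mul, ← pow_add, map_sum,
    PowerSeries.coeff_X_pow]
  exact chi_sub_chi_sub_mul hp hq hr hpq hqr hrp n

lemma coe_mul_eq_of_mul_incexcD_eq {Q : Polynomial ℤ}
    (hQ : Q * incexcD p q r = incexcN p q r) :
    (Q : PowerSeries ℤ) * ((1 - T ^ (p * q)) * (1 - T ^ (q * r)) * (1 - T ^ (r * p)) * (1 - T)) =
      (1 - T ^ (p * q * r)) * (1 - T ^ p) * (1 - T ^ q) * (1 - T ^ r) := by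
  have h := congrArg ((↑) : Polynomial ℤ → PowerSeries ℤ) hQ
  simp only [incexcD, incexcN, Polynomial.coe_mul, Polynomial.coe_sub, Polynomial.coe_pow,
    Polynomial.coe_X, Polynomial.coe_one] at h
  linear_combination h

lemma one_sub_X_pow_ne_zero {k : ℕ} (hk : 0 < k) : (1 - T ^ k) ≠ 0 := by
  intro h
  simpa [zero_pow hk.ne'] using congrArg PowerSeries.constantCoeff h

lemma chiSeries_mul_one_sub_X_pow_mul (hp : 0 < p) (hq : 0 < q) (hr : 0 < r)
    (hpq : p.Coprime q) (hqr : q.Coprime r) (hrp : r.Coprime p) :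
    chiSeries p q r * (1 - T ^ (p * q * r)) *
        ((1 - T ^ (p * q)) * (1 - T ^ (q * r)) * (1 - T ^ (r * p))) =
      (1 - T ^ (p * q * r)) ^ 3 := by
  have geom (a k : ℕ) : (∑ i ∈ Finset.range k, (T ^ a) ^ i) * (1 - T ^ a) = 1 - T ^ (k * a) := by
    rw [geom_sum_mul_neg, pow_mul']
  rw [chiSeries_mul_one_sub_X_pow hp hq hr hpq hqr hrp]
  calc _ = (∑ x ∈ Finset.range p, (T ^ (q * r)) ^ x) * (1 - T ^ (q * r)) *
        ((∑ y ∈ Finset.range q, (T ^ (r * p)) ^ y) * (1 - T ^ (r * p))) *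
        ((∑ z ∈ Finset.range r, (T ^ (p * q)) ^ z) * (1 - T ^ (p * q))) := by ring
    _ = (1 - T ^ (p * (q * r))) * (1 - T ^ (q * (r * p))) * (1 - T ^ (r * (p * q))) := by
        rw [geom, geom, geom]
    _ = _ := by ring

lemma coe_mul_one_sub_X_pow (hp : 0 < p) (hq : 0 < q) (hr : 0 < r)
    (hpq : p.Coprime q) (hqr : q.Coprime r) (hrp : r.Coprime p) {Q : Polynomial ℤ}
    (hQ : Q * incexcD p q r = incexcN p q r) :
    (Q : PowerSeries ℤ) * (1 - T ^ (p * q * r)) =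
      chiSeries p q r * ((1 - T ^ q) * (1 - T ^ r)) * ∑ i ∈ Finset.range p, T ^ i := by
  have hc : (1 - T ^ (p * q * r)) ^ 2 * (1 - T) ≠ 0 :=
    mul_ne_zero (pow_ne_zero _ (one_sub_X_pow_ne_zero (by positivity)))
      (by simpa using one_sub_X_pow_ne_zero one_pos)
  refine mul_right_cancel₀ hc ?_
  calc (Q : PowerSeries ℤ) * (1 - T ^ (p * q * r)) * ((1 - T ^ (p * q * r)) ^ 2 * (1 - T))
      = Q * ((1 - T ^ (p * q)) * (1 - T ^ (q * r)) * (1 - T ^ (r * p)) * (1 - T)) *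
          (chiSeries p q r * (1 - T ^ (p * q * r))) := by
        linear_combination (-(Q * (1 - T))) * chiSeries_mul_one_sub_X_pow_mul hp hq hr hpq hqr hrp
    _ = (1 - T ^ (p * q * r)) * (1 - T ^ p) * (1 - T ^ q) * (1 - T ^ r) *
          (chiSeries p q r * (1 - T ^ (p * q * r))) := by
        rw [coe_mul_eq_of_mul_incexcD_eq hQ]
    _ = _ := by
        linear_combination (-(chiSeries p q r * (1 - T ^ q) * (1 - T ^ r) *
          (1 - T ^ (p * q * r)) ^ 2)) * geom_sum_mul_neg T p

lemma coeff_chiSeries_mul_geom_sum (m : ℕ) :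
    PowerSeries.coeff m (chiSeries p q r * ((1 - T ^ q) * (1 - T ^ r)) *
        ∑ i ∈ Finset.range p, T ^ i) =
      ∑ i ∈ Finset.range p, (chi p q r (m - i) - chi p q r (m - i - q) - chi p q r (m - i - r) +
        chi p q r (m - i - q - r)) := by
  rw [Finset.mul_sum, map_sum]
  refine Finset.sum_congr rfl fun i _ => ?_
  have hexpand : chiSeries p q r * ((1 - T ^ q) * (1 - T ^ r)) * T ^ i =
      chiSeries p q r * T ^ i - chiSeries p q r * T ^ (i + q) - chiSeries p q r * T ^ (i + r) +
        chiSeries p q r * T ^ (i + q + r) := by ring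
  simp only [hexpand, map_add, map_sub, coeff_chiSeries_mul_X_pow, Nat.cast_add, sub_sub]

end Series

theorem stmt_9 (p q r : ℕ) (hp : 3 ≤ p) (hq : 3 ≤ q) (hr : 3 ≤ r)
    (hpq : Nat.Coprime p q) (hqr : Nat.Coprime q r) (hrp : Nat.Coprime r p)
    (Q : Polynomial ℤ) (hQ : Q * incexcD p q r = incexcN p q r)
    (m : ℤ) (hm : m < (p : ℤ) * q * r) :
    coeffZ Q m =
      ∑ i ∈ Finset.range p,
        (chi p q r (m - i) - chi p q r (m - i - q) - chi p q r (m - i - r) +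
          chi p q r (m - i - q - r)) := by
  rcases lt_or_ge m 0 with hm₀ | hm₀
  · rw [coeffZ, if_neg hm₀.not_ge]
    symm
    refine Finset.sum_eq_zero fun i _ => ?_
    simp only [chi_of_neg (by omega : m - i < 0), chi_of_neg (by omega : m - i - q < 0),
      chi_of_neg (by omega : m - i - r < 0), chi_of_neg (by omega : m - i - q - r < 0), sub_zero,
      add_zero]
  lift m to ℕ using hm₀
  have hlt : ¬ p * q * r ≤ m := by exact_mod_cast hm.not_ge
  have hcoeff := congrArg (PowerSeries.coeff m)
    (coe_mul_one_sub_X_pow (by omega) (by omega) (by omega) hpq hqr hrp hQ)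
  rw [mul_sub, mul_one, map_sub, PowerSeries.coeff_mul_X_pow', if_neg hlt, sub_zero,
    Polynomial.coeff_coe, coeff_chiSeries_mul_geom_sum] at hcoeff
  rw [coeffZ, if_pos (by positivity), Int.toNat_natCast, hcoeff]
end

section
/- (Lemma 2.) Let p, q, r be integers with p, q, r ≥ 3 that are relatively prime in pairs, and let χ = χ_{p,q,r}. Then for every integer n, |χ(n) − χ(n−p) − χ(n−q) + χ(n−p−q)| ≤ 1. -/
open Classical

def RepN (p q r : ℕ) (n x y z δ : ℤ) : Prop :=
  0 ≤ x ∧ x < p ∧ 0 ≤ y ∧ y < q ∧ 0 ≤ z ∧ z < r ∧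
    n = x * q * r + y * r * p + z * p * q + δ * p * q * r

lemma rep_exists (p q r : ℕ) (hp : 0 < p) (hq : 0 < q) (hr : 0 < r)
    (hpq : Nat.Coprime p q) (hqr : Nat.Coprime q r) (hrp : Nat.Coprime r p)
    (n : ℤ) : ∃ x y z δ, RepN p q r n x y z δ := by
  have hpZ : (0:ℤ) < p := by exact_mod_cast hp
  have hqZ : (0:ℤ) < q := by exact_mod_cast hq
  have hrZ : (0:ℤ) < r := by exact_mod_cast hr
  have cpq : IsCoprime (p:ℤ) (q:ℤ) := Nat.isCoprime_iff_coprime.mpr hpq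
  have cqr : IsCoprime (q:ℤ) (r:ℤ) := Nat.isCoprime_iff_coprime.mpr hqr
  have crp : IsCoprime (r:ℤ) (p:ℤ) := Nat.isCoprime_iff_coprime.mpr hrp
  obtain ⟨u, v, huv⟩ := (cpq.mul_right crp.symm).symm
  obtain ⟨u', v', huv'⟩ := (cqr.mul_right cpq.symm).symm
  obtain ⟨u'', v'', huv''⟩ := (crp.mul_right cqr.symm).symm
  set x := (n * u) % (p:ℤ) with hxdef
  set y := (n * u') % (q:ℤ) with hydef
  set z := (n * u'') % (r:ℤ) with hzdef
  have hx1 : 0 ≤ x := Int.emod_nonneg _ (ne_of_gt hpZ)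
  have hx2 : x < p := Int.emod_lt_of_pos _ hpZ
  have hy1 : 0 ≤ y := Int.emod_nonneg _ (ne_of_gt hqZ)
  have hy2 : y < q := Int.emod_lt_of_pos _ hqZ
  have hz1 : 0 ≤ z := Int.emod_nonneg _ (ne_of_gt hrZ)
  have hz2 : z < r := Int.emod_lt_of_pos _ hrZ
  have hex : x = n * u - (p:ℤ) * (n * u / p) := by rw [hxdef, Int.emod_def]
  have hey : y = n * u' - (q:ℤ) * (n * u' / q) := by rw [hydef, Int.emod_def]
  have hez : z = n * u'' - (r:ℤ) * (n * u'' / r) := by rw [hzdef, Int.emod_def]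
  have hdp : (p:ℤ) ∣ n - x * q * r - y * r * p - z * p * q := by
    refine ⟨n * v + (n * u / p) * q * r - y * r - z * q, ?_⟩
    linear_combination (-(q:ℤ)*r) * hex - n * huv
  have hdq : (q:ℤ) ∣ n - x * q * r - y * r * p - z * p * q := by
    refine ⟨n * v' + (n * u' / q) * r * p - x * r - z * p, ?_⟩
    linear_combination (-(r:ℤ)*p) * hey - n * huv'
  have hdr : (r:ℤ) ∣ n - x * q * r - y * r * p - z * p * q := by
    refine ⟨n * v'' + (n * u'' / r) * p * q - x * q - y * p, ?_⟩
    linear_combination (-(p:ℤ)*q) * hez - n * huv''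
  have hdpqr : ((p:ℤ) * q * r) ∣ n - x * q * r - y * r * p - z * p * q :=
    (crp.symm.mul_left cqr).mul_dvd (cpq.mul_dvd hdp hdq) hdr
  refine ⟨x, y, z, (n - x * q * r - y * r * p - z * p * q) / ((p:ℤ) * q * r),
    hx1, hx2, hy1, hy2, hz1, hz2, ?_⟩
  have := Int.ediv_mul_cancel hdpqr
  linarith [this]

lemma rep_unique (p q r : ℕ) (hp : 0 < p) (hq : 0 < q) (hr : 0 < r)
    (hpq : Nat.Coprime p q) (hqr : Nat.Coprime q r) (hrp : Nat.Coprime r p)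
    {n x y z δ x' y' z' δ' : ℤ}
    (h1 : RepN p q r n x y z δ) (h2 : RepN p q r n x' y' z' δ') :
    x = x' ∧ y = y' ∧ z = z' ∧ δ = δ' := by
  have hpZ : (0:ℤ) < p := by exact_mod_cast hp
  have hqZ : (0:ℤ) < q := by exact_mod_cast hq
  have hrZ : (0:ℤ) < r := by exact_mod_cast hr
  have cpq : IsCoprime (p:ℤ) (q:ℤ) := Nat.isCoprime_iff_coprime.mpr hpq
  have cqr : IsCoprime (q:ℤ) (r:ℤ) := Nat.isCoprime_iff_coprime.mpr hqr
  have crp : IsCoprime (r:ℤ) (p:ℤ) := Nat.isCoprime_iff_coprime.mpr hrp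
  obtain ⟨hx1, hx2, hy1, hy2, hz1, hz2, he⟩ := h1
  obtain ⟨hx1', hx2', hy1', hy2', hz1', hz2', he'⟩ := h2
  have E : x * q * r + y * r * p + z * p * q + δ * p * q * r
      = x' * q * r + y' * r * p + z' * p * q + δ' * p * q * r := by
    linarith [he, he']
  have hdx : (p:ℤ) ∣ (x - x') * ((q:ℤ) * r) := by
    refine ⟨(y' - y) * r + (z' - z) * q + (δ' - δ) * q * r, ?_⟩
    linear_combination E
  have hxx : x = x' := by
    have h := (cpq.mul_right crp.symm).dvd_of_dvd_mul_right hdx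
    have := Int.eq_zero_of_abs_lt_dvd h (by rw [abs_lt]; constructor <;> linarith)
    linarith
  have hdy : (q:ℤ) ∣ (y - y') * ((r:ℤ) * p) := by
    refine ⟨(x' - x) * r + (z' - z) * p + (δ' - δ) * p * r, ?_⟩
    linear_combination E
  have hyy : y = y' := by
    have h := (cqr.mul_right cpq.symm).dvd_of_dvd_mul_right hdy
    have := Int.eq_zero_of_abs_lt_dvd h (by rw [abs_lt]; constructor <;> linarith)
    linarith
  have hdz : (r:ℤ) ∣ (z - z') * ((p:ℤ) * q) := by
    refine ⟨(x' - x) * q + (y' - y) * p + (δ' - δ) * p * q, ?_⟩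
    linear_combination E
  have hzz : z = z' := by
    have h := (crp.mul_right cqr.symm).dvd_of_dvd_mul_right hdz
    have := Int.eq_zero_of_abs_lt_dvd h (by rw [abs_lt]; constructor <;> linarith)
    linarith
  refine ⟨hxx, hyy, hzz, ?_⟩
  have hne : ((p:ℤ) * q * r) ≠ 0 := by positivity
  have : δ * ((p:ℤ) * q * r) = δ' * ((p:ℤ) * q * r) := by
    subst hxx hyy hzz; linarith [E]
  exact mul_right_cancel₀ hne this

lemma chi_eq (p q r : ℕ) (hp : 0 < p) (hq : 0 < q) (hr : 0 < r)
    (hpq : Nat.Coprime p q) (hqr : Nat.Coprime q r) (hrp : Nat.Coprime r p)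
    {n x y z δ : ℤ} (h : RepN p q r n x y z δ) :
    chi p q r n = if 0 ≤ δ then 1 else 0 := by
  unfold chi
  split_ifs with h1 h2 h2
  · rfl
  · exfalso
    obtain ⟨x', y', z', δ', hx1', hx2', hy1', hy2', hz1', hz2', hδ', he'⟩ := h1
    have h' : RepN p q r n x' y' z' δ' := ⟨hx1', hx2', hy1', hy2', hz1', hz2', he'⟩
    obtain ⟨-, -, -, hd⟩ := rep_unique p q r hp hq hr hpq hqr hrp h h'
    exact h2 (hd ▸ hδ')
  · exfalso
    obtain ⟨hx1, hx2, hy1, hy2, hz1, hz2, he⟩ := h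
    exact h1 ⟨x, y, z, δ, hx1, hx2, hy1, hy2, hz1, hz2, h2, he⟩
  · rfl

lemma bezout_pair (q r : ℕ) (hq : 3 ≤ q) (hr : 3 ≤ r) (hqr : Nat.Coprime q r) :
    ∃ b c : ℤ, 1 ≤ b ∧ b < q ∧ 1 ≤ c ∧ c < r ∧ b * r + c * q = (q:ℤ) * r + 1 := by
  have hqZ : (3:ℤ) ≤ q := by exact_mod_cast hq
  have hrZ : (3:ℤ) ≤ r := by exact_mod_cast hr
  have cqr : IsCoprime (q:ℤ) (r:ℤ) := Nat.isCoprime_iff_coprime.mpr hqr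
  obtain ⟨u, v, huv⟩ := cqr.symm  -- u*r + v*q = 1
  set b := u % (q:ℤ) with hbdef
  have hb1 : 0 ≤ b := Int.emod_nonneg _ (by linarith)
  have hb2 : b < q := Int.emod_lt_of_pos _ (by linarith)
  have heb : b = u - (q:ℤ) * (u / q) := by rw [hbdef, Int.emod_def]
  have hdvd : (q:ℤ) ∣ b * r - 1 := by
    refine ⟨-v - (u / q) * r, ?_⟩
    linear_combination (r:ℤ) * heb + huv
  have hbne : b ≠ 0 := by
    intro hb0
    rw [hb0] at hdvd
    have h1 : (q:ℤ) ∣ (1:ℤ) := by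
      have h2 : (q:ℤ) ∣ (-1 : ℤ) := by simpa using hdvd
      exact dvd_neg.mp h2
    have := Int.le_of_dvd one_pos h1
    linarith
  have hb1' : 1 ≤ b := by omega
  obtain ⟨k, hk⟩ := hdvd  -- b*r - 1 = q*k
  refine ⟨b, r - k, hb1', hb2, ?_, ?_, by linarith⟩
  · -- 1 ≤ r - k : q*(r-k) = q*r + 1 - b*r ≥ q*r + 1 - (q-1)*r = r+1 > 0
    have h1 : (q:ℤ) * (r - k) = (q:ℤ) * r + 1 - b * r := by linarith
    have h2 : 0 < (q:ℤ) * (r - k) := by nlinarith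
    nlinarith
  · -- r - k < r  ⟺  0 < k ⟺ q*k = b*r - 1 > 0
    have h2 : 0 < (q:ℤ) * k := by nlinarith
    nlinarith

lemma stepP (p q r : ℕ) {b c n x y z δ : ℤ}
    (hbc : b * r + c * q = (q:ℤ) * r + 1)
    (hb1 : 1 ≤ b) (hb2 : b < q) (hc1 : 1 ≤ c) (hc2 : c < r)
    (h : RepN p q r n x y z δ) :
    RepN p q r (n + p) x (if y + b < q then y + b else y + b - q)
      (if z + c < r then z + c else z + c - r)
      (δ - 1 + (if y + b < q then 0 else 1) + (if z + c < r then 0 else 1)) := by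
  obtain ⟨hx1, hx2, hy1, hy2, hz1, hz2, he⟩ := h
  refine ⟨hx1, hx2, ?_, ?_, ?_, ?_, ?_⟩ <;> split_ifs <;>
    first
      | omega
      | linear_combination he - (p:ℤ) * hbc

lemma stepQ (p q r : ℕ) {a d n x y z δ : ℤ}
    (had : a * r + d * p = (p:ℤ) * r + 1)
    (ha1 : 1 ≤ a) (ha2 : a < p) (hd1 : 1 ≤ d) (hd2 : d < r)
    (h : RepN p q r n x y z δ) :
    RepN p q r (n + q) (if x + a < p then x + a else x + a - p) y
      (if z + d < r then z + d else z + d - r)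
      (δ - 1 + (if x + a < p then 0 else 1) + (if z + d < r then 0 else 1)) := by
  obtain ⟨hx1, hx2, hy1, hy2, hz1, hz2, he⟩ := h
  refine ⟨?_, ?_, hy1, hy2, ?_, ?_, ?_⟩ <;> split_ifs <;>
    first
      | omega
      | linear_combination he - (q:ℤ) * had

set_option maxHeartbeats 1600000 in
theorem stmt_10 (p q r : ℕ) (hp : 3 ≤ p) (hq : 3 ≤ q) (hr : 3 ≤ r)
    (hpq : Nat.Coprime p q) (hqr : Nat.Coprime q r) (hrp : Nat.Coprime r p)
    (n : ℤ) :
    |chi p q r n - chi p q r (n - p) - chi p q r (n - q) +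
      chi p q r (n - p - q)| ≤ 1 := by
  have hp0 : 0 < p := by omega
  have hq0 : 0 < q := by omega
  have hr0 : 0 < r := by omega
  obtain ⟨b, c, hb1, hb2, hc1, hc2, hbc⟩ := bezout_pair q r hq hr hqr
  obtain ⟨a, d, ha1, ha2, hd1, hd2, had⟩ := bezout_pair p r hp hr hrp.symm
  obtain ⟨x, y, z, δ, hm⟩ := rep_exists p q r hp0 hq0 hr0 hpq hqr hrp (n - p - q)
  have h1 := stepP p q r hbc hb1 hb2 hc1 hc2 hm
  have h2 := stepQ p q r had ha1 ha2 hd1 hd2 hm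
  have h3 := stepQ p q r had ha1 ha2 hd1 hd2 h1
  rw [show n - (p:ℤ) - q + p = n - q from by ring] at h1
  rw [show n - (p:ℤ) - q + q = n - p from by ring] at h2
  rw [show n - (p:ℤ) - q + p + q = n from by ring] at h3
  rw [chi_eq p q r hp0 hq0 hr0 hpq hqr hrp hm,
      chi_eq p q r hp0 hq0 hr0 hpq hqr hrp h1,
      chi_eq p q r hp0 hq0 hr0 hpq hqr hrp h2,
      chi_eq p q r hp0 hq0 hr0 hpq hqr hrp h3]
  rw [abs_le]
  constructor <;> split_ifs <;> omega
end

section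
/- Let p, q, r be integers with p, q, r ≥ 3 that are relatively prime in pairs, let χ = χ_{p,q,r}, and let k be an integer with 0 ≤ k < pq. Then: (i) χ(kr + t·pq) = χ(kr) for every integer t with 0 ≤ t < r; and (ii) χ(kr − t·pq) = 0 for every integer t > 0. -/
open Classical

theorem stmt_11 (p q r : ℕ) (hp : 3 ≤ p) (hq : 3 ≤ q) (hr : 3 ≤ r)
    (hpq : Nat.Coprime p q) (hqr : Nat.Coprime q r) (hrp : Nat.Coprime r p)
    (k : ℤ) (hk0 : 0 ≤ k) (hk1 : k < (p : ℤ) * q) :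
    (∀ t : ℤ, 0 ≤ t → t < r →
      chi p q r (k * r + t * (p * q)) = chi p q r (k * r)) ∧
    (∀ t : ℤ, 0 < t → chi p q r (k * r - t * (p * q)) = 0) := by
  have hp' : (3 : ℤ) ≤ p := by exact_mod_cast hp
  have hq' : (3 : ℤ) ≤ q := by exact_mod_cast hq
  have hr' : (3 : ℤ) ≤ r := by exact_mod_cast hr
  have hr0 : (r : ℤ) ≠ 0 := by linarith
  have hcop : IsCoprime ((r : ℤ)) ((p : ℤ) * (q : ℤ)) := by
    have h : Nat.Coprime r (p * q) := Nat.Coprime.mul_right hrp hqr.symm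
    have := Nat.isCoprime_iff_coprime.mpr h
    push_cast at this
    exact this
  have hdvd : ∀ w : ℤ, (r : ℤ) ∣ w * ((p : ℤ) * q) → (r : ℤ) ∣ w :=
    fun w h => hcop.dvd_of_dvd_mul_right h
  constructor
  · intro t ht0 ht1
    unfold chi
    refine if_congr ?_ rfl rfl
    constructor
    · rintro ⟨x, y, z, δ, hx0, hx1, hy0, hy1, hz0, hz1, hδ0, heq⟩
      have hd : (r : ℤ) ∣ (z - t) * ((p : ℤ) * q) :=
        ⟨k - x * q - y * p - δ * (p * q), by linear_combination -heq⟩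
      have hzt : z - t = 0 := by
        refine Int.eq_zero_of_abs_lt_dvd (hdvd _ hd) ?_
        rw [abs_lt]; constructor <;> linarith
      refine ⟨x, y, 0, δ, hx0, hx1, hy0, hy1, le_refl 0, by linarith, hδ0, ?_⟩
      have hz : z = t := by linarith
      linear_combination heq + ((p : ℤ) * q) * hzt
    · rintro ⟨x, y, z, δ, hx0, hx1, hy0, hy1, hz0, hz1, hδ0, heq⟩
      have hd : (r : ℤ) ∣ z * ((p : ℤ) * q) :=
        ⟨k - x * q - y * p - δ * (p * q), by linear_combination -heq⟩
      have hz : z = 0 := by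
        refine Int.eq_zero_of_abs_lt_dvd (hdvd _ hd) ?_
        rw [abs_lt]; constructor <;> linarith
      refine ⟨x, y, t, δ, hx0, hx1, hy0, hy1, ht0, ht1, hδ0, ?_⟩
      linear_combination heq + ((p : ℤ) * q) * hz
  · intro t ht
    unfold chi
    rw [if_neg]
    rintro ⟨x, y, z, δ, hx0, hx1, hy0, hy1, hz0, hz1, hδ0, heq⟩
    have hd : (r : ℤ) ∣ (z + t) * ((p : ℤ) * q) :=
      ⟨k - x * q - y * p - δ * (p * q), by linear_combination -heq⟩
    obtain ⟨m, hm⟩ := hdvd _ hd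
    have hm1 : 1 ≤ m := by
      by_contra h
      push_neg at h
      have hm0 : m ≤ 0 := by linarith
      nlinarith
    have hk : k = x * q + y * p + (m + δ) * ((p : ℤ) * q) := by
      have hcancel : k * r = (x * q + y * p + (m + δ) * ((p : ℤ) * q)) * r := by
        linear_combination heq + ((p : ℤ) * q) * hm
      exact mul_right_cancel₀ hr0 hcancel
    nlinarith [mul_nonneg hx0 (by linarith : (0:ℤ) ≤ q), mul_nonneg hy0 (by linarith : (0:ℤ) ≤ p),
      mul_nonneg (by linarith : (0:ℤ) ≤ m + δ - 1) (by nlinarith : (0:ℤ) ≤ (p:ℤ) * q)]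
end

section
/- (Lemma 3.) Let p, q, r be integers with p, q, r ≥ 3 that are relatively prime in pairs, let m be an integer with m < pqr, and set I₁ = (m−q−p, m−q] ∩ ℤ and I₂ = (m−p, m] ∩ ℤ. If there is no n ∈ I₁ ∪ I₂ such that r divides n and (χ(n) = 1 or χ(n−r) = 1), then a_m = a_{m−pq}, where a_m denotes the m-th coefficient of Q_{p,q,r} (interpreted as 0 for m < 0 or m > (p−1)(q−1)(r−1)) and χ = χ_{p,q,r}. -/
open Polynomial Classical

/-!
Let `M` be the set of nonnegative multiples of `qr` and `T` the numerical semigroup generated by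
`qr` and `rp`, i.e. the sums `s + y · rp` with `s ∈ M`, `0 ≤ y < q`. As `q` divides every element
of `M` and is prime to `rp`, these sums are direct, whence `(1 - X^{rp}) F_T = (1 - X^{pqr}) F_M` for the generating series, and
`(1 - X^{qr}) F_M = 1`. Substituting `F_T (1 - X^{rp}) (1 - X^{qr}) = 1 - X^{pqr}` into the
defining identity of `Q` and cancelling `(1 - X^{qr}) (1 - X^{rp}) (1 - X)` leaves
`Q · (1 - X^{pq}) = F_T · (1 + X + ⋯ + X^{p-1}) (1 - X^q) (1 - X^r)`,
so `a_m - a_{m-pq}` is a signed sum of values `1_T(n)` and `1_T(n - r)` with `n ∈ I₁ ∪ I₂`.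
Every element of `T` is divisible by `r` and representable, so the hypothesis kills every term.
-/

def addMultiples (S : Set ℤ) (a k : ℤ) : Set ℤ :=
  {n | ∃ z, 0 ≤ z ∧ z < k ∧ n - z * a ∈ S}

def nonnegMultiples (b : ℤ) : Set ℤ :=
  {n | ∃ u, 0 ≤ u ∧ n = u * b}

noncomputable def indicatorSeries (S : Set ℤ) : PowerSeries ℤ :=
  PowerSeries.mk fun n => S.indicator 1 (n : ℤ)

section addMultiples

variable {S : Set ℤ} {a k : ℤ}

theorem eq_of_sub_mul_mem_addMultiples (hS : ∀ s ∈ S, k ∣ s) (hka : IsCoprime k a)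
    {n z z' : ℤ} (hz : 0 ≤ z ∧ z < k) (hz' : 0 ≤ z' ∧ z' < k) (hn : n - z * a ∈ S)
    (hn' : n - z' * a ∈ S) : z = z' := by
  have hdvd : k ∣ (z' - z) * a := by
    simpa [sub_mul] using dvd_sub (hS _ hn) (hS _ hn')
  have := Int.eq_zero_of_abs_lt_dvd (hka.dvd_of_dvd_mul_right hdvd)
    (abs_lt.mpr ⟨by linarith, by linarith⟩)
  linarith

/-- Read as `1_T(n) + 1_S(n - k a) = 1_S(n) + 1_T(n - a)`: both sides count the ways of writing
`n = s + z a` with `s ∈ S` and `0 ≤ z ≤ k`, since coprimality makes `z` unique modulo `k`. -/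
theorem indicator_addMultiples_sub (hk : 0 < k) (hS : ∀ s ∈ S, k ∣ s) (hka : IsCoprime k a)
    (n : ℤ) :
    ((addMultiples S a k).indicator 1 n - (addMultiples S a k).indicator 1 (n - a) : ℤ)
      = S.indicator 1 n - S.indicator 1 (n - k * a) := by
  have huniq := @eq_of_sub_mul_mem_addMultiples S a k hS hka
  have digit_zero : n ∈ S → n ∈ addMultiples S a k := fun h =>
    ⟨0, le_rfl, hk, by simpa using h⟩
  have digit_top : n - k * a ∈ S → n - a ∈ addMultiples S a k := fun h =>
    ⟨k - 1, by linarith, by linarith, by convert h using 1; ring⟩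
  have digit_lower : n ∈ addMultiples S a k → n ∉ S → n - a ∈ addMultiples S a k := by
    rintro ⟨z, hz0, hzk, hz⟩ hn
    have : z ≠ 0 := by rintro rfl; simp_all
    exact ⟨z - 1, by omega, by omega, by convert hz using 1; ring⟩
  have digit_raise :
      n - a ∈ addMultiples S a k → n - k * a ∉ S → n ∈ addMultiples S a k := by
    rintro ⟨z, hz0, hzk, hz⟩ hn
    have : z + 1 ≠ k := by rintro rfl; exact hn (by convert hz using 1; ring)
    exact ⟨z + 1, by omega, by omega, by convert hz using 1; ring⟩
  have top_of_zero : n ∈ S → n - a ∈ addMultiples S a k → n - k * a ∈ S := by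
    rintro hn ⟨z, hz0, hzk, hz⟩
    have hz' : n - (z + 1) * a ∈ S := by convert hz using 1; ring
    obtain rfl : z + 1 = k := by
      by_contra hne
      have := huniq ⟨by omega, by omega⟩ ⟨le_rfl, hk⟩ hz' (by simpa using hn)
      omega
    exact hz'
  have zero_of_top : n - k * a ∈ S → n ∈ addMultiples S a k → n ∈ S := by
    rintro hn ⟨z, hz0, hzk, hz⟩
    obtain rfl : z = 0 := by
      by_contra hne
      have := huniq (n := n - a) (z := z - 1) (z' := k - 1) ⟨by omega, by omega⟩
        ⟨by omega, by omega⟩ (by convert hz using 1; ring) (by convert hn using 1; ring)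
      omega
    simpa using hz
  simp only [Set.indicator_apply, Pi.one_apply]
  split_ifs <;> norm_num <;> tauto

theorem nonneg_of_mem_addMultiples (hS₀ : ∀ s ∈ S, 0 ≤ s) (ha : 0 ≤ a) {n : ℤ}
    (hn : n ∈ addMultiples S a k) : 0 ≤ n := by
  obtain ⟨z, hz0, -, hz⟩ := hn
  nlinarith [hS₀ _ hz]

end addMultiples

theorem nonneg_of_mem_nonnegMultiples {b n : ℤ} (hb : 0 ≤ b) (hn : n ∈ nonnegMultiples b) :
    0 ≤ n := by
  obtain ⟨u, hu, rfl⟩ := hn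
  positivity

theorem coeff_X_pow_mul_mk {f : ℤ → ℤ} (hf : ∀ n < 0, f n = 0) (k n : ℕ) :
    PowerSeries.coeff n (PowerSeries.X ^ k * PowerSeries.mk fun j => f j) = f (n - k) := by
  rw [PowerSeries.coeff_X_pow_mul']
  split_ifs with h
  · rw [PowerSeries.coeff_mk, Nat.cast_sub h]
  · rw [hf _ (by omega)]

theorem coe_eq_mk_coeffZ (Q : Polynomial ℤ) :
    (Q : PowerSeries ℤ) = PowerSeries.mk fun n => coeffZ Q n := by
  ext n
  simp [coeffZ]

theorem coeffZ_of_neg (Q : Polynomial ℤ) {m : ℤ} (hm : m < 0) : coeffZ Q m = 0 :=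
  if_neg (not_le.mpr hm)

theorem coeff_X_pow_mul_indicatorSeries {S : Set ℤ} (hS : ∀ s ∈ S, 0 ≤ s) (k n : ℕ) :
    PowerSeries.coeff n (PowerSeries.X ^ k * indicatorSeries S)
      = S.indicator (1 : ℤ → ℤ) (n - k) :=
  coeff_X_pow_mul_mk (f := S.indicator 1)
    (fun _ hn => Set.indicator_of_notMem (fun h => by linarith [hS _ h]) _) k n

theorem one_sub_X_pow_mul_indicatorSeries_addMultiples {S : Set ℤ} {a k : ℕ} (hk : 0 < k)
    (hS : ∀ s ∈ S, (k : ℤ) ∣ s) (hS₀ : ∀ s ∈ S, 0 ≤ s) (hka : Nat.Coprime k a) :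
    (1 - PowerSeries.X ^ a) * indicatorSeries (addMultiples S a k)
      = (1 - PowerSeries.X ^ (k * a)) * indicatorSeries S := by
  have hT₀ : ∀ n ∈ addMultiples S a k, 0 ≤ n := fun n =>
    nonneg_of_mem_addMultiples hS₀ (Nat.cast_nonneg a)
  ext n
  have := indicator_addMultiples_sub (by exact_mod_cast hk) hS
    (Nat.isCoprime_iff_coprime.mpr hka) n
  simp only [sub_mul, one_mul, map_sub]
  rw [coeff_X_pow_mul_indicatorSeries hS₀, coeff_X_pow_mul_indicatorSeries hT₀]
  simpa [indicatorSeries] using this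

theorem mem_nonnegMultiples_iff_sub_mem {b n : ℤ} (hb : 0 < b) (hn : 0 < n) :
    n ∈ nonnegMultiples b ↔ n - b ∈ nonnegMultiples b := by
  constructor
  · rintro ⟨u, hu, rfl⟩
    have : 0 < u := pos_of_mul_pos_left hn hb.le
    exact ⟨u - 1, by omega, by ring⟩
  · rintro ⟨u, hu, h⟩
    exact ⟨u + 1, by omega, by linear_combination h⟩

theorem one_sub_X_pow_mul_indicatorSeries_nonnegMultiples {b : ℕ} (hb : 0 < b) :
    (1 - PowerSeries.X ^ b) * indicatorSeries (nonnegMultiples b) = 1 := by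
  have hb' : (0 : ℤ) < b := by exact_mod_cast hb
  have hM₀ : ∀ n ∈ nonnegMultiples b, 0 ≤ n := fun n => nonneg_of_mem_nonnegMultiples hb'.le
  ext n
  simp only [sub_mul, one_mul, map_sub, PowerSeries.coeff_one]
  rw [coeff_X_pow_mul_indicatorSeries hM₀]
  simp only [indicatorSeries, PowerSeries.coeff_mk, Set.indicator_apply, Pi.one_apply]
  rcases Nat.eq_zero_or_pos n with rfl | hn
  · rw [if_pos ⟨0, le_rfl, by simp⟩,
      if_neg fun h => absurd (hM₀ _ h) (by push_cast; linarith)]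
    simp
  · rw [if_neg hn.ne', mem_nonnegMultiples_iff_sub_mem hb' (by exact_mod_cast hn)]
    simp

/-- The numerical semigroup generated by `qr` and `rp`: as `q · rp = p · qr`, the coefficient of
`rp` can be taken below `q`. -/
def pairSemigroup (p q r : ℕ) : Set ℤ :=
  addMultiples (nonnegMultiples (q * r)) (r * p) q

section pairSemigroup

variable {p q r : ℕ}

theorem dvd_of_mem_pairSemigroup {n : ℤ} (hn : n ∈ pairSemigroup p q r) : (r : ℤ) ∣ n := by
  obtain ⟨y, -, -, u, -, hu⟩ := hn
  exact ⟨u * q + y * p, by linear_combination hu⟩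

theorem chi_eq_one_of_mem_pairSemigroup (hp : 0 < p) (hr : 0 < r) {n : ℤ}
    (hn : n ∈ pairSemigroup p q r) : chi p q r n = 1 := by
  obtain ⟨y, hy0, hyq, u, hu0, hu⟩ := hn
  have hp' : (0 : ℤ) < p := by exact_mod_cast hp
  refine if_pos ⟨u % p, y, 0, u / p, Int.emod_nonneg _ hp'.ne', Int.emod_lt_of_pos _ hp', hy0,
    hyq, le_rfl, ?_, Int.ediv_nonneg hu0 hp'.le, ?_⟩
  · exact_mod_cast hr
  · linear_combination hu + (q * r : ℤ) * (Int.emod_add_mul_ediv u p).symm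

end pairSemigroup

theorem coe_mul_one_sub_X_pow_eq {p q r : ℕ} (hp : 0 < p) (hq : 0 < q) (hr : 0 < r)
    (hpq : Nat.Coprime p q) (hqr : Nat.Coprime q r) {Q : Polynomial ℤ}
    (hQ : Q * incexcD p q r = incexcN p q r) :
    (Q : PowerSeries ℤ) * (1 - PowerSeries.X ^ (p * q))
      = indicatorSeries (pairSemigroup p q r) * ((∑ i ∈ Finset.range p, PowerSeries.X ^ i)
          * (1 - PowerSeries.X ^ q) * (1 - PowerSeries.X ^ r)) := by
  have hQ' := congrArg (fun P : Polynomial ℤ => (P : PowerSeries ℤ)) hQ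
  simp only [incexcD, incexcN, Polynomial.coe_mul, Polynomial.coe_sub,
    Polynomial.coe_pow, Polynomial.coe_one, Polynomial.coe_X] at hQ'
  have hM : ∀ s ∈ nonnegMultiples ((q * r : ℕ) : ℤ), ((q : ℕ) : ℤ) ∣ s := by
    rintro s ⟨u, -, rfl⟩
    exact ⟨u * r, by push_cast; ring⟩
  have hM₀ : ∀ s ∈ nonnegMultiples ((q * r : ℕ) : ℤ), 0 ≤ s := fun s =>
    nonneg_of_mem_nonnegMultiples (Nat.cast_nonneg _)
  have hstep : (1 - PowerSeries.X ^ (r * p)) * indicatorSeries (pairSemigroup p q r)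
      = (1 - PowerSeries.X ^ (p * q * r))
          * indicatorSeries (nonnegMultiples ((q * r : ℕ) : ℤ)) := by
    rw [show p * q * r = q * (r * p) by ring]
    exact_mod_cast one_sub_X_pow_mul_indicatorSeries_addMultiples hq hM hM₀
      (Nat.Coprime.mul_right hqr hpq.symm)
  have hbase := one_sub_X_pow_mul_indicatorSeries_nonnegMultiples (b := q * r) (by positivity)
  set X : PowerSeries ℤ := PowerSeries.X
  set F := indicatorSeries (pairSemigroup p q r)
  have hF : F * (1 - X ^ (r * p)) * (1 - X ^ (q * r)) = 1 - X ^ (p * q * r) := by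
    linear_combination (1 - X ^ (q * r)) * hstep + (1 - X ^ (p * q * r)) * hbase
  have hG : (∑ i ∈ Finset.range p, X ^ i) * (1 - X) = 1 - X ^ p := by
    linear_combination -(geom_sum_mul X p)
  have hne : ∀ k ≠ 0, (1 - X ^ k : PowerSeries ℤ) ≠ 0 := fun k hk h => by
    simpa [X, zero_pow hk] using congrArg PowerSeries.constantCoeff h
  have hX : (1 - X : PowerSeries ℤ) ≠ 0 := by simpa using hne 1 one_ne_zero
  refine mul_right_cancel₀ (mul_ne_zero (mul_ne_zero (hne (q * r) (by positivity))
    (hne (r * p) (by positivity))) hX) ?_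
  linear_combination hQ' - (1 - X ^ p) * (1 - X ^ q) * (1 - X ^ r) * hF
    - F * (1 - X ^ (r * p)) * (1 - X ^ (q * r)) * (1 - X ^ q) * (1 - X ^ r) * hG

theorem coeffZ_sub_coeffZ_sub_mul {p q r : ℕ} (hp : 0 < p) (hq : 0 < q) (hr : 0 < r)
    (hpq : Nat.Coprime p q) (hqr : Nat.Coprime q r) {Q : Polynomial ℤ}
    (hQ : Q * incexcD p q r = incexcN p q r) (m : ℤ) :
    coeffZ Q m - coeffZ Q (m - p * q)
      = ∑ i ∈ Finset.range p, ((pairSemigroup p q r).indicator (1 : ℤ → ℤ) (m - i)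
          - (pairSemigroup p q r).indicator 1 (m - i - q)
          - (pairSemigroup p q r).indicator 1 (m - i - r)
          + (pairSemigroup p q r).indicator 1 (m - i - q - r)) := by
  set T := pairSemigroup p q r
  have hT₀ : ∀ n ∈ T, 0 ≤ n := fun n => nonneg_of_mem_addMultiples
    (fun s => nonneg_of_mem_nonnegMultiples (by positivity)) (by positivity)
  rcases lt_or_ge m 0 with hm | hm
  · have hT : ∀ n < 0, T.indicator (1 : ℤ → ℤ) n = 0 := fun n hn =>
      Set.indicator_of_notMem (fun h => by linarith [hT₀ n h]) _
    have hpq₀ : (0 : ℤ) ≤ p * q := by positivity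
    rw [coeffZ_of_neg Q hm, coeffZ_of_neg Q (by linarith)]
    refine (Finset.sum_eq_zero fun i _ => ?_).symm
    rw [hT _ (by omega), hT _ (by omega), hT _ (by omega), hT _ (by omega)]
    simp
  lift m to ℕ using hm
  have h := congrArg (PowerSeries.coeff m) (coe_mul_one_sub_X_pow_eq hp hq hr hpq hqr hQ)
  have hsum : indicatorSeries T * ((∑ i ∈ Finset.range p, PowerSeries.X ^ i)
      * (1 - PowerSeries.X ^ q) * (1 - PowerSeries.X ^ r))
      = ∑ i ∈ Finset.range p, (PowerSeries.X ^ i * indicatorSeries T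
        - PowerSeries.X ^ (i + q) * indicatorSeries T - PowerSeries.X ^ (i + r) * indicatorSeries T
        + PowerSeries.X ^ (i + q + r) * indicatorSeries T) := by
    rw [Finset.sum_mul, Finset.sum_mul, Finset.mul_sum]
    exact Finset.sum_congr rfl fun i _ => by ring
  rw [hsum, mul_sub, mul_one, mul_comm, coe_eq_mk_coeffZ, map_sub, map_sum, PowerSeries.coeff_mk,
    coeff_X_pow_mul_mk (fun _ hn => coeffZ_of_neg Q hn)] at h
  simp only [map_add, map_sub, coeff_X_pow_mul_indicatorSeries hT₀] at h
  convert h using 3 <;> push_cast <;> ring_nf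

theorem stmt_12_general (p q r : ℕ) (hp : 3 ≤ p) (hq : 3 ≤ q) (hr : 3 ≤ r)
    (hpq : Nat.Coprime p q) (hqr : Nat.Coprime q r)
    (Q : Polynomial ℤ) (hQ : Q * incexcD p q r = incexcN p q r)
    (m : ℤ)
    (hno : ¬ ∃ n : ℤ,
      ((m - q - p < n ∧ n ≤ m - q) ∨ (m - p < n ∧ n ≤ m)) ∧
      (r : ℤ) ∣ n ∧ (chi p q r n = 1 ∨ chi p q r (n - r) = 1)) :
    coeffZ Q m = coeffZ Q (m - p * q) := by
  have hT : ∀ n, ((m - q - p < n ∧ n ≤ m - q) ∨ (m - p < n ∧ n ≤ m)) →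
      (pairSemigroup p q r).indicator (1 : ℤ → ℤ) n = 0 ∧
        (pairSemigroup p q r).indicator (1 : ℤ → ℤ) (n - r) = 0 := by
    refine fun n hn => ⟨Set.indicator_of_notMem (fun h => hno ⟨n, hn, ?_⟩) _,
      Set.indicator_of_notMem (fun h => hno ⟨n, hn, ?_⟩) _⟩
    · exact ⟨dvd_of_mem_pairSemigroup h,
        .inl (chi_eq_one_of_mem_pairSemigroup (by omega) (by omega) h)⟩
    · exact ⟨dvd_sub_self_right.mp (dvd_of_mem_pairSemigroup h),
        .inr (chi_eq_one_of_mem_pairSemigroup (by omega) (by omega) h)⟩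
  rw [← sub_eq_zero, coeffZ_sub_coeffZ_sub_mul (by omega) (by omega) (by omega) hpq hqr hQ]
  refine Finset.sum_eq_zero fun i hi => ?_
  have hip : (i : ℤ) < p := by exact_mod_cast Finset.mem_range.mp hi
  obtain ⟨h₁, h₂⟩ := hT (m - i) (.inr ⟨by omega, by omega⟩)
  obtain ⟨h₃, h₄⟩ := hT (m - i - q) (.inl ⟨by omega, by omega⟩)
  rw [h₁, h₂, h₃, h₄]
  simp

theorem stmt_12 (p q r : ℕ) (hp : 3 ≤ p) (hq : 3 ≤ q) (hr : 3 ≤ r)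
    (hpq : Nat.Coprime p q) (hqr : Nat.Coprime q r) (hrp : Nat.Coprime r p)
    (Q : Polynomial ℤ) (hQ : Q * incexcD p q r = incexcN p q r)
    (m : ℤ) (hm : m < (p : ℤ) * q * r)
    (hno : ¬ ∃ n : ℤ,
      ((m - q - p < n ∧ n ≤ m - q) ∨ (m - p < n ∧ n ≤ m)) ∧
      (r : ℤ) ∣ n ∧ (chi p q r n = 1 ∨ chi p q r (n - r) = 1)) :
    coeffZ Q m = coeffZ Q (m - p * q) :=
  stmt_12_general p q r hp hq hr hpq hqr Q hQ m hno
end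

section
/- (Lemma 4.) Let p, q, r be integers with p, q, r ≥ 3 that are relatively prime in pairs, and define f(n) = x_n·q + y_n·p from the unique representation of n. Then for every integer n, χ_{p,q,r}(n) = 1 if and only if f(n) ≤ ⌊n/r⌋. -/
open Classical

lemma uniq_delta {p q r : ℕ} (hpq : Nat.Coprime p q) (hqr : Nat.Coprime q r)
    (hrp : Nat.Coprime r p)
    {x y z δ x' y' z' δ' : ℤ}
    (hx0 : 0 ≤ x) (hx1 : x < p) (hy0 : 0 ≤ y) (hy1 : y < q)
    (hz0 : 0 ≤ z) (hz1 : z < r)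
    (hx0' : 0 ≤ x') (hx1' : x' < p) (hy0' : 0 ≤ y') (hy1' : y' < q)
    (hz0' : 0 ≤ z') (hz1' : z' < r)
    (h : x * q * r + y * r * p + z * p * q + δ * p * q * r
       = x' * q * r + y' * r * p + z' * p * q + δ' * p * q * r) :
    x = x' ∧ y = y' ∧ z = z' ∧ δ = δ' := by
  have hp0 : (0:ℤ) < p := by exact_mod_cast (by omega : 0 < p)
  have hq0 : (0:ℤ) < q := by exact_mod_cast (by omega : 0 < q)
  have hr0 : (0:ℤ) < r := by exact_mod_cast (by omega : 0 < r)
  have cpq : IsCoprime (p:ℤ) q := hpq.isCoprime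
  have cqr : IsCoprime (q:ℤ) r := hqr.isCoprime
  have crp : IsCoprime (r:ℤ) p := hrp.isCoprime
  -- x = x'
  have hdx : (p:ℤ) ∣ (x - x') * q * r := by
    refine ⟨(y' - y) * r + (z' - z) * q + (δ' - δ) * q * r, ?_⟩
    linear_combination h
  have hxx : x = x' := by
    have := Int.eq_zero_of_abs_lt_dvd
      (cpq.dvd_of_dvd_mul_right (crp.symm.dvd_of_dvd_mul_right (by rwa [mul_assoc] at hdx)))
      (by rw [abs_lt]; omega)
    omega
  subst hxx
  have h2 : y * r * p + z * p * q + δ * p * q * r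
       = y' * r * p + z' * p * q + δ' * p * q * r := by linarith
  have hdy : (q:ℤ) ∣ (y - y') * r * p := by
    refine ⟨(z' - z) * p + (δ' - δ) * p * r, ?_⟩
    linear_combination h2
  have hyy : y = y' := by
    have := Int.eq_zero_of_abs_lt_dvd
      (cqr.dvd_of_dvd_mul_right (hpq.symm.isCoprime.dvd_of_dvd_mul_right
        (by rwa [mul_assoc] at hdy)))
      (by rw [abs_lt]; omega)
    omega
  subst hyy
  have h3 : z * p * q + δ * p * q * r = z' * p * q + δ' * p * q * r := by linarith
  have hdz : (r:ℤ) ∣ (z - z') * p * q := by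
    refine ⟨(δ' - δ) * p * q, ?_⟩
    linear_combination h3
  have hzz : z = z' := by
    have := Int.eq_zero_of_abs_lt_dvd
      (crp.dvd_of_dvd_mul_right (cqr.symm.dvd_of_dvd_mul_right hdz))
      (by rw [abs_lt]; omega)
    omega
  subst hzz
  have h4 : δ * (p * q * r) = δ' * (p * q * r) := by linear_combination h3
  have : δ = δ' := by
    have hne : (p:ℤ) * q * r ≠ 0 := by positivity
    exact mul_right_cancel₀ hne h4
  exact ⟨rfl, rfl, rfl, this⟩

theorem stmt_13 (p q r : ℕ) (hp : 3 ≤ p) (hq : 3 ≤ q) (hr : 3 ≤ r)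
    (hpq : Nat.Coprime p q) (hqr : Nat.Coprime q r) (hrp : Nat.Coprime r p)
    (f : ℤ → ℤ)
    (hf : ∀ n : ℤ, ∃ x y z δ : ℤ,
      0 ≤ x ∧ x < p ∧ 0 ≤ y ∧ y < q ∧ 0 ≤ z ∧ z < r ∧
      n = x * q * r + y * r * p + z * p * q + δ * p * q * r ∧
      f n = x * q + y * p) :
    ∀ n : ℤ, chi p q r n = 1 ↔ f n ≤ n / (r : ℤ) := by
  intro n
  obtain ⟨x, y, z, δ, hx0, hx1, hy0, hy1, hz0, hz1, hn, hfn⟩ := hf n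
  have hp0 : (0:ℤ) < p := by exact_mod_cast (by omega : 0 < p)
  have hq0 : (0:ℤ) < q := by exact_mod_cast (by omega : 0 < q)
  have hr0 : (0:ℤ) < r := by exact_mod_cast (by omega : 0 < r)
  have hdiv : f n ≤ n / (r:ℤ) ↔ f n * r ≤ n := Int.le_ediv_iff_mul_le hr0
  rw [hdiv]
  constructor
  · intro hchi
    have hex : ∃ x y z δ : ℤ, 0 ≤ x ∧ x < p ∧ 0 ≤ y ∧ y < q ∧ 0 ≤ z ∧ z < r ∧ 0 ≤ δ ∧
        n = x * q * r + y * r * p + z * p * q + δ * p * q * r := by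
      by_contra hcon
      simp only [chi, hcon, if_false] at hchi
      exact one_ne_zero hchi.symm
    obtain ⟨x', y', z', δ', hx0', hx1', hy0', hy1', hz0', hz1', hδ', hn'⟩ := hex
    obtain ⟨hxx, hyy, hzz, hδδ⟩ := uniq_delta hpq hqr hrp hx0 hx1 hy0 hy1 hz0 hz1
      hx0' hx1' hy0' hy1' hz0' hz1' (hn ▸ hn')
    have hδ : 0 ≤ δ := hδδ ▸ hδ'
    rw [hfn, hn]
    nlinarith [mul_nonneg (mul_nonneg hz0 hp0.le) hq0.le,
      mul_nonneg (mul_nonneg (mul_nonneg hδ hp0.le) hq0.le) hr0.le]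
  · intro hle
    have hδ : 0 ≤ δ := by
      rw [hfn, hn] at hle
      -- hle : (x*q + y*p) * r ≤ x*q*r + y*r*p + z*p*q + δ*p*q*r
      have h1 : 0 ≤ z * p * q + δ * p * q * r := by nlinarith
      by_contra hneg
      push_neg at hneg
      have hδ1 : δ ≤ -1 := by omega
      have hA : z * (↑p * ↑q) ≤ ((r:ℤ) - 1) * (↑p * ↑q) :=
        mul_le_mul_of_nonneg_right (by omega) (by positivity)
      have hB : δ * (↑p * ↑q * ↑r) ≤ (-1) * (↑p * ↑q * ↑r) :=
        mul_le_mul_of_nonneg_right hδ1 (by positivity)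
      have hC : (0:ℤ) < ↑p * ↑q := mul_pos hp0 hq0
      nlinarith [h1, hA, hB, hC]
    have : chi p q r n = 1 := by
      simp only [chi]
      rw [if_pos ⟨x, y, z, δ, hx0, hx1, hy0, hy1, hz0, hz1, hδ, hn⟩]
    exact this
end

section
/- (Lemma 6.) Let p, q, s be integers with p, q ≥ 3, s ≥ 1, and gcd(p,q) = gcd(s,pq) = 1, and set r = pq + s, so that p, q, r are relatively prime in pairs. Then for every integer m < pqr, the coefficient a_m of Q_{p,q,r} (interpreted as 0 for m < 0 or m > (p−1)(q−1)(r−1)) satisfies a_m = Σ₁ + Σ₂, where Σ₁ = σ_s(m) − σ_s(m−p) − σ_s(m−q) + σ_s(m−q−p) and Σ₂ = σ_p(m−s) − σ_p(m−s−pq) − σ_p(m−q−s) + σ_p(m−q−s−pq), with σ_k(m) = Σ_{m−k < n ≤ m} χ_{p,q,r}(n). -/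
open Polynomial Classical

/-- The summatory function `σ_k(m) = Σ_{m-k < n ≤ m} chi p q r n`. -/
noncomputable def sigmaSum (p q r k : ℕ) (m : ℤ) : ℤ :=
  ∑ i ∈ Finset.range k, chi p q r (m - i)

/-!
By uniqueness of the representation `n = x·qr + y·rp + z·pq + δ_n·pqr`, multiplying the
generating series `∑ χ(n) Xⁿ` by `1 - X^{pqr}` leaves the indicator of `{n | δ_n = 0}`, which is
the product of the geometric sums `∑_{x<p} X^{x·qr}`, `∑_{y<q} X^{y·rp}`, `∑_{z<r} X^{z·pq}`.
Hence `∑ χ(n) Xⁿ = (1 - X^{pqr})² / ((1 - X^{qr})(1 - X^{rp})(1 - X^{pq}))`, and the defining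
identity of `Q_{p,q,r}` becomes `Q (1 - X^{pqr})(1 - X) = (∑ χ(n) Xⁿ)(1 - X^p)(1 - X^q)(1 - X^r)`.
For `r = pq + s`, writing `1 - X^r = (1 - X^s) + X^s (1 - X^{pq})` and dividing by `1 - X` turns
`∑ χ(n) Xⁿ` into the window sums `σ_s` and `σ_p`; below degree `pqr` the factor `1 - X^{pqr}`
does not change the coefficients of `Q`.
-/

open Finset PowerSeries

local notation "𝕏" => (PowerSeries.X : PowerSeries ℤ)

namespace Ternary

variable {p q r : ℕ}

def digitBox (p q r : ℕ) : Finset (ℕ × ℕ × ℕ) := range p ×ˢ range q ×ˢ range r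

def digitVal (p q r : ℕ) (t : ℕ × ℕ × ℕ) : ℕ := t.1 * (q * r) + t.2.1 * (r * p) + t.2.2 * (p * q)

/-- For pairwise coprime `p, q, r`, `HasRepr p q r n δ` holds exactly when `δ = δ_n`. -/
def HasRepr (p q r : ℕ) (n δ : ℤ) : Prop :=
  ∃ t ∈ digitBox p q r, n = digitVal p q r t + δ * (p * q * r)

lemma eq_of_dvd_mul_sub_mul {m c a b : ℕ} (hmc : m.Coprime c) (ha : a < m) (hb : b < m)
    (h : (m : ℤ) ∣ b * c - a * c) : a = b :=
  ((Nat.modEq_iff_dvd.mpr (by exact_mod_cast h)).cancel_right_of_coprime hmc).eq_of_lt_of_lt ha hb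

lemma digitVal_add_mul_injective (hpq : p.Coprime q) (hqr : q.Coprime r) (hrp : r.Coprime p)
    {t t' : ℕ × ℕ × ℕ} (ht : t ∈ digitBox p q r) (ht' : t' ∈ digitBox p q r) {δ δ' : ℤ}
    (h : (digitVal p q r t : ℤ) + δ * (p * q * r) = digitVal p q r t' + δ' * (p * q * r)) :
    t = t' ∧ δ = δ' := by
  obtain ⟨x, y, z⟩ := t
  obtain ⟨x', y', z'⟩ := t'
  simp only [digitBox, mem_product, mem_range] at ht ht'
  simp only [digitVal] at h
  push_cast at h
  have hx : x = x' := eq_of_dvd_mul_sub_mul (hpq.mul_right hrp.symm) ht.1 ht'.1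
    ⟨(y - y') * r + (z - z') * q + (δ - δ') * (q * r), by push_cast; linear_combination -h⟩
  have hy : y = y' := eq_of_dvd_mul_sub_mul (hqr.mul_right hpq.symm) ht.2.1 ht'.2.1
    ⟨(x - x') * r + (z - z') * p + (δ - δ') * (r * p), by push_cast; linear_combination -h⟩
  have hz : z = z' := eq_of_dvd_mul_sub_mul (hrp.mul_right hqr.symm) ht.2.2 ht'.2.2
    ⟨(x - x') * q + (y - y') * p + (δ - δ') * (p * q), by push_cast; linear_combination -h⟩
  subst hx hy hz
  have hpqr : ((p : ℤ) * q * r) ≠ 0 := by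
    have : p * q * r ≠ 0 := by simp only [ne_eq, mul_eq_zero, not_or]; omega
    exact_mod_cast this
  exact ⟨rfl, mul_right_cancel₀ hpqr (by linear_combination h)⟩

lemma hasRepr_sub_iff {n δ : ℤ} :
    HasRepr p q r (n - p * q * r) δ ↔ HasRepr p q r n (δ + 1) :=
  exists_congr fun _ => and_congr_right fun _ => by
    constructor <;> intro h <;> linear_combination h

lemma HasRepr.unique (hpq : p.Coprime q) (hqr : q.Coprime r) (hrp : r.Coprime p) {n δ δ' : ℤ}
    (h : HasRepr p q r n δ) (h' : HasRepr p q r n δ') : δ = δ' := by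
  obtain ⟨t, ht, rfl⟩ := h
  obtain ⟨t', ht', h'⟩ := h'
  exact (digitVal_add_mul_injective hpq hqr hrp ht ht' h').2

lemma chi_eq_ite (n : ℤ) :
    chi p q r n = if ∃ δ, 0 ≤ δ ∧ HasRepr p q r n δ then 1 else 0 := by
  refine if_congr ⟨?_, ?_⟩ rfl rfl
  · rintro ⟨x, y, z, δ, hx0, hx, hy0, hy, hz0, hz, hδ, rfl⟩
    lift x to ℕ using hx0
    lift y to ℕ using hy0
    lift z to ℕ using hz0
    refine ⟨δ, hδ, (x, y, z), ?_, ?_⟩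
    · simp only [digitBox, mem_product, mem_range]
      omega
    · simp only [digitVal]
      push_cast
      ring
  · rintro ⟨δ, hδ, ⟨x, y, z⟩, ht, rfl⟩
    simp only [digitBox, mem_product, mem_range] at ht
    refine ⟨x, y, z, δ, by positivity, by exact_mod_cast ht.1, by positivity,
      by exact_mod_cast ht.2.1, by positivity, by exact_mod_cast ht.2.2, hδ, ?_⟩
    simp only [digitVal]
    push_cast
    ring

lemma chi_of_neg {n : ℤ} (hn : n < 0) : chi p q r n = 0 := by
  rw [chi_eq_ite, if_neg]
  rintro ⟨δ, hδ, t, -, rfl⟩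
  have : 0 ≤ δ * (p * q * r) := by positivity
  omega

/-- Subtracting `pqr` lowers `δ_n` by one, so only the representable `n` with `δ_n = 0` survive. -/
lemma chi_sub_chi_sub (hpq : p.Coprime q) (hqr : q.Coprime r) (hrp : r.Coprime p) (n : ℤ) :
    chi p q r n - chi p q r (n - p * q * r) = if HasRepr p q r n 0 then 1 else 0 := by
  simp only [chi_eq_ite, hasRepr_sub_iff]
  by_cases h0 : HasRepr p q r n 0
  · have : ¬∃ δ : ℤ, 0 ≤ δ ∧ HasRepr p q r n (δ + 1) := fun ⟨δ, hδ, h⟩ => by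
      have := h.unique hpq hqr hrp h0
      omega
    rw [if_pos ⟨0, le_rfl, h0⟩, if_neg this, if_pos h0, sub_zero]
  · have : (∃ δ : ℤ, 0 ≤ δ ∧ HasRepr p q r n δ) ↔ ∃ δ : ℤ, 0 ≤ δ ∧ HasRepr p q r n (δ + 1) := by
      constructor
      · rintro ⟨δ, hδ, h⟩
        have hδ0 : δ ≠ 0 := by rintro rfl; exact h0 h
        exact ⟨δ - 1, by omega, by rwa [sub_add_cancel]⟩
      · rintro ⟨δ, hδ, h⟩
        exact ⟨δ + 1, by omega, h⟩
    rw [if_congr this rfl rfl, sub_self, if_neg h0]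

lemma digitVal_injOn (hpq : p.Coprime q) (hqr : q.Coprime r) (hrp : r.Coprime p) :
    Set.InjOn (digitVal p q r) (digitBox p q r) := fun _ ht _ ht' h =>
  (digitVal_add_mul_injective (δ := 0) (δ' := 0) hpq hqr hrp ht ht' (by rw [h])).1

lemma coeff_sum_digitBox (hpq : p.Coprime q) (hqr : q.Coprime r) (hrp : r.Coprime p) (n : ℕ) :
    coeff n (∑ t ∈ digitBox p q r, 𝕏 ^ digitVal p q r t) = if HasRepr p q r n 0 then 1 else 0 := by
  rw [← sum_image (digitVal_injOn hpq hqr hrp), map_sum]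
  simp only [PowerSeries.coeff_X_pow, sum_ite_eq]
  refine if_congr ?_ rfl rfl
  simp only [mem_image, HasRepr, zero_mul, add_zero, Nat.cast_inj, eq_comm]

lemma sum_digitBox_mul {R : Type*} [CommRing R] (a : R) :
    (∑ t ∈ digitBox p q r, a ^ digitVal p q r t) *
        ((1 - a ^ (q * r)) * (1 - a ^ (r * p)) * (1 - a ^ (p * q))) =
      (1 - a ^ (p * q * r)) ^ 3 := by
  have hsum : ∑ t ∈ digitBox p q r, a ^ digitVal p q r t =
      (∑ x ∈ range p, (a ^ (q * r)) ^ x) * (∑ y ∈ range q, (a ^ (r * p)) ^ y) *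
        ∑ z ∈ range r, (a ^ (p * q)) ^ z := by
    simp only [digitBox, digitVal, sum_product, pow_add, ← pow_mul, mul_comm _ (_ * _),
      ← mul_sum, ← sum_mul]
  rw [hsum]
  calc _ = ((∑ x ∈ range p, (a ^ (q * r)) ^ x) * (1 - a ^ (q * r))) *
        ((∑ y ∈ range q, (a ^ (r * p)) ^ y) * (1 - a ^ (r * p))) *
        ((∑ z ∈ range r, (a ^ (p * q)) ^ z) * (1 - a ^ (p * q))) := by ring
    _ = (1 - a ^ (p * q * r)) ^ 3 := by
      rw [geom_sum_mul_neg, geom_sum_mul_neg, geom_sum_mul_neg, ← pow_mul, ← pow_mul, ← pow_mul]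
      ring

noncomputable def chiSeries (p q r : ℕ) : ℤ⟦X⟧ := PowerSeries.mk fun n => chi p q r n

lemma coeff_chiSeries_mul_X_pow (n t : ℕ) :
    coeff n (chiSeries p q r * 𝕏 ^ t) = chi p q r (n - t) := by
  rw [PowerSeries.coeff_mul_X_pow']
  split_ifs with h
  · rw [chiSeries, coeff_mk, Nat.cast_sub h]
  · rw [chi_of_neg (by omega)]

lemma one_sub_X_pow_ne_zero {R : Type*} [Ring R] [Nontrivial R] {k : ℕ} (hk : k ≠ 0) :
    1 - (PowerSeries.X : R⟦X⟧) ^ k ≠ 0 := fun h => by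
  simpa [PowerSeries.coeff_one, PowerSeries.coeff_X_pow, hk] using congrArg (PowerSeries.coeff k) h

lemma chiSeries_mul_one_sub_X_pow (hpq : p.Coprime q) (hqr : q.Coprime r) (hrp : r.Coprime p) :
    chiSeries p q r * (1 - 𝕏 ^ (p * q * r)) = ∑ t ∈ digitBox p q r, 𝕏 ^ digitVal p q r t := by
  ext n
  rw [coeff_sum_digitBox hpq hqr hrp, ← chi_sub_chi_sub hpq hqr hrp, mul_one_sub, map_sub,
    coeff_chiSeries_mul_X_pow, chiSeries, coeff_mk]
  push_cast
  rfl

lemma chiSeries_mul (hp : 0 < p) (hq : 0 < q) (hr : 0 < r)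
    (hpq : p.Coprime q) (hqr : q.Coprime r) (hrp : r.Coprime p) :
    chiSeries p q r * ((1 - 𝕏 ^ (q * r)) * (1 - 𝕏 ^ (r * p)) * (1 - 𝕏 ^ (p * q))) =
      (1 - 𝕏 ^ (p * q * r)) ^ 2 := by
  refine mul_right_cancel₀ (one_sub_X_pow_ne_zero (k := p * q * r) (by positivity)) ?_
  calc _ = chiSeries p q r * (1 - 𝕏 ^ (p * q * r)) *
        ((1 - 𝕏 ^ (q * r)) * (1 - 𝕏 ^ (r * p)) * (1 - 𝕏 ^ (p * q))) := by ring
    _ = _ := by rw [chiSeries_mul_one_sub_X_pow hpq hqr hrp, sum_digitBox_mul]; ring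

lemma coe_mul_one_sub_X_pow_mul_one_sub_X (hp : 0 < p) (hq : 0 < q) (hr : 0 < r)
    (hpq : p.Coprime q) (hqr : q.Coprime r) (hrp : r.Coprime p) {Q : ℤ[X]}
    (hQ : Q * incexcD p q r = incexcN p q r) :
    (Q : ℤ⟦X⟧) * (1 - 𝕏 ^ (p * q * r)) * (1 - 𝕏) =
      chiSeries p q r * ((1 - 𝕏 ^ p) * (1 - 𝕏 ^ q) * (1 - 𝕏 ^ r)) := by
  have hQ' := congrArg (fun P : ℤ[X] => (P : ℤ⟦X⟧)) hQ
  simp only [incexcD, incexcN, Polynomial.coe_mul, Polynomial.coe_sub, Polynomial.coe_pow,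
    Polynomial.coe_one, Polynomial.coe_X] at hQ'
  have hD : (1 - 𝕏 ^ (q * r)) * (1 - 𝕏 ^ (r * p)) * (1 - 𝕏 ^ (p * q)) ≠ 0 := by
    refine mul_ne_zero (mul_ne_zero ?_ ?_) ?_ <;> exact one_sub_X_pow_ne_zero (by positivity)
  refine mul_right_cancel₀ hD ?_
  linear_combination (1 - 𝕏 ^ (p * q * r)) * hQ' -
    (1 - 𝕏 ^ p) * (1 - 𝕏 ^ q) * (1 - 𝕏 ^ r) * chiSeries_mul hp hq hr hpq hqr hrp

lemma one_sub_pow_mul_one_sub_pow_mul_one_sub_pow_add {R : Type*} [CommRing R] (a : R)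
    (p q s : ℕ) :
    (1 - a ^ p) * (1 - a ^ q) * (1 - a ^ (p * q + s)) =
      (1 - a) * ((∑ i ∈ range s, a ^ i) * ((1 - a ^ p) * (1 - a ^ q)) +
        (∑ i ∈ range p, a ^ i) * a ^ s * ((1 - a ^ (p * q)) * (1 - a ^ q))) := by
  linear_combination -(1 - a ^ p) * (1 - a ^ q) * mul_neg_geom_sum a s -
    a ^ s * (1 - a ^ (p * q)) * (1 - a ^ q) * mul_neg_geom_sum a p

noncomputable def sigmaSeries (p q r k : ℕ) : ℤ⟦X⟧ := chiSeries p q r * ∑ i ∈ range k, 𝕏 ^ i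

lemma coeff_sigmaSeries_mul_X_pow (k n t : ℕ) :
    coeff n (sigmaSeries p q r k * 𝕏 ^ t) = sigmaSum p q r k (n - t) := by
  simp only [sigmaSeries, sum_mul, mul_sum, mul_assoc, ← pow_add, map_sum,
    coeff_chiSeries_mul_X_pow, sigmaSum]
  refine sum_congr rfl fun i _ => ?_
  push_cast
  ring_nf

lemma coeff_mul_one_sub_X_pow_mul_one_sub_X_pow {R : Type*} [CommRing R] {F : R⟦X⟧}
    {f : ℤ → R} (hF : ∀ n t : ℕ, coeff n (F * PowerSeries.X ^ t) = f (n - t)) (a b n : ℕ) :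
    PowerSeries.coeff n (F * ((1 - PowerSeries.X ^ a) * (1 - PowerSeries.X ^ b))) =
      f n - f (n - a) - f (n - b) + f (n - b - a) := by
  have hexp : F * ((1 - PowerSeries.X ^ a) * (1 - PowerSeries.X ^ b)) =
      F * PowerSeries.X ^ 0 - F * PowerSeries.X ^ a - F * PowerSeries.X ^ b +
        F * PowerSeries.X ^ (b + a) := by ring
  rw [hexp, map_add, map_sub, map_sub, hF, hF, hF, hF]
  push_cast
  ring_nf

lemma coeff_coe_mul_one_sub_X_pow {R : Type*} [CommRing R] {Q : R[X]} {N n : ℕ} (h : n < N) :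
    PowerSeries.coeff n ((Q : R⟦X⟧) * (1 - PowerSeries.X ^ N)) = Q.coeff n := by
  rw [mul_one_sub, map_sub, PowerSeries.coeff_mul_X_pow', if_neg (by omega), sub_zero,
    Polynomial.coeff_coe]

lemma sigmaSum_of_neg (k : ℕ) {m : ℤ} (hm : m < 0) : sigmaSum p q r k m = 0 :=
  sum_eq_zero fun i _ => chi_of_neg (by omega)

end Ternary

open Ternary

theorem stmt_15_general (p q s : ℕ) (hp : 3 ≤ p) (hq : 3 ≤ q)
    (hpq : Nat.Coprime p q) (hspq : Nat.Coprime s (p * q))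
    (Q : Polynomial ℤ)
    (hQ : Q * incexcD p q (p * q + s) = incexcN p q (p * q + s))
    (m : ℤ) (hm : m < (p : ℤ) * q * (p * q + s)) :
    coeffZ Q m =
      (sigmaSum p q (p * q + s) s m - sigmaSum p q (p * q + s) s (m - p) -
        sigmaSum p q (p * q + s) s (m - q) +
        sigmaSum p q (p * q + s) s (m - q - p)) +
      (sigmaSum p q (p * q + s) p (m - s) -
        sigmaSum p q (p * q + s) p (m - s - p * q) -
        sigmaSum p q (p * q + s) p (m - q - s) +
        sigmaSum p q (p * q + s) p (m - q - s - p * q)) := by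
  have hqr : q.Coprime (p * q + s) :=
    (Nat.coprime_mul_right_add_right q s p).mpr (Nat.Coprime.coprime_mul_left_right hspq).symm
  have hrp : (p * q + s).Coprime p :=
    ((Nat.coprime_mul_left_add_right p s q).mpr
      (Nat.Coprime.coprime_mul_right_right hspq).symm).symm
  rcases lt_or_ge m 0 with hm0 | hm0
  · have hpq0 : (0 : ℤ) ≤ p * q := by positivity
    simp (disch := omega) only [coeffZ, if_neg hm0.not_ge, sigmaSum_of_neg, sub_zero, add_zero]
  lift m to ℕ using hm0
  have hsplit : (Q : ℤ⟦X⟧) * (1 - 𝕏 ^ (p * q * (p * q + s))) =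
      sigmaSeries p q (p * q + s) s * ((1 - 𝕏 ^ p) * (1 - 𝕏 ^ q)) +
        sigmaSeries p q (p * q + s) p * 𝕏 ^ s * ((1 - 𝕏 ^ (p * q)) * (1 - 𝕏 ^ q)) := by
    refine mul_right_cancel₀ (one_sub_X_pow_ne_zero one_ne_zero) ?_
    rw [pow_one, coe_mul_one_sub_X_pow_mul_one_sub_X (by omega) (by omega) (by positivity)
      hpq hqr hrp hQ, one_sub_pow_mul_one_sub_pow_mul_one_sub_pow_add, sigmaSeries, sigmaSeries]
    ring
  have hcoeff := congrArg (PowerSeries.coeff m) hsplit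
  rw [map_add, coeff_coe_mul_one_sub_X_pow (by exact_mod_cast hm),
    coeff_mul_one_sub_X_pow_mul_one_sub_X_pow (coeff_sigmaSeries_mul_X_pow s),
    coeff_mul_one_sub_X_pow_mul_one_sub_X_pow (f := fun n => sigmaSum p q (p * q + s) p (n - s))
      fun n t => by rw [mul_assoc, ← pow_add, coeff_sigmaSeries_mul_X_pow]; push_cast; ring_nf]
    at hcoeff
  push_cast at hcoeff
  rw [coeffZ, if_pos (by positivity), Int.toNat_natCast, hcoeff, sub_right_comm _ ((p : ℤ) * q),
    sub_right_comm (_ - _) ((p : ℤ) * q)]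

theorem stmt_15 (p q s : ℕ) (hp : 3 ≤ p) (hq : 3 ≤ q) (hs : 1 ≤ s)
    (hpq : Nat.Coprime p q) (hspq : Nat.Coprime s (p * q))
    (Q : Polynomial ℤ)
    (hQ : Q * incexcD p q (p * q + s) = incexcN p q (p * q + s))
    (m : ℤ) (hm : m < (p : ℤ) * q * (p * q + s)) :
    coeffZ Q m =
      (sigmaSum p q (p * q + s) s m - sigmaSum p q (p * q + s) s (m - p) -
        sigmaSum p q (p * q + s) s (m - q) +
        sigmaSum p q (p * q + s) s (m - q - p)) +
      (sigmaSum p q (p * q + s) p (m - s) -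
        sigmaSum p q (p * q + s) p (m - s - p * q) -
        sigmaSum p q (p * q + s) p (m - q - s) +
        sigmaSum p q (p * q + s) p (m - q - s - p * q)) :=
  stmt_15_general p q s hp hq hpq hspq Q hQ m hm
end

section
/- (Lemma 9.) Let p, q, s be integers with 3 ≤ p < q and 3 ≤ s < q such that p, q, s are relatively prime in pairs, and set r = pq + s, so that p, q, r are relatively prime in pairs. Let χ = χ_{p,q,r} and χ' = χ_{p,q,s}. Then for all integers k and j with |j| < s, χ(kr + j) = χ'(ks + j). -/
open Classical

set_option maxHeartbeats 1000000 in
theorem stmt_17 (p q s : ℕ) (hp : 3 ≤ p) (hpq' : p < q) (hs : 3 ≤ s)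
    (hsq : s < q) (hpq : Nat.Coprime p q) (hqs : Nat.Coprime q s)
    (hsp : Nat.Coprime s p)
    (k j : ℤ) (hj : |j| < (s : ℤ)) :
    chi p q (p * q + s) (k * ((p : ℤ) * q + s) + j) = chi p q s (k * s + j) := by
  have hP : (3:ℤ) ≤ p := by exact_mod_cast hp
  have hQ : (p:ℤ) < q := by exact_mod_cast hpq'
  have hS : (3:ℤ) ≤ s := by exact_mod_cast hs
  have hSQ : (s:ℤ) < q := by exact_mod_cast hsq
  obtain ⟨hj1, hj2⟩ := abs_lt.mp hj
  have hiff : (∃ x y z δ : ℤ, 0 ≤ x ∧ x < p ∧ 0 ≤ y ∧ y < q ∧ 0 ≤ z ∧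
      z < ((p * q + s : ℕ) : ℤ) ∧ 0 ≤ δ ∧
      k * ((p : ℤ) * q + s) + j = x * q * ((p * q + s : ℕ) : ℤ) +
        y * ((p * q + s : ℕ) : ℤ) * p + z * p * q + δ * p * q * ((p * q + s : ℕ) : ℤ)) ↔
      (∃ x y z δ : ℤ, 0 ≤ x ∧ x < p ∧ 0 ≤ y ∧ y < q ∧ 0 ≤ z ∧ z < (s : ℤ) ∧ 0 ≤ δ ∧
      k * s + j = x * q * s + y * s * p + z * p * q + δ * p * q * s) := by
    push_cast
    constructor
    · rintro ⟨x, y, z, δ, hx0, hxp, hy0, hyq, hz0, hzr, hd0, heq⟩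
      set u : ℤ := k - x*q - y*p - δ*p*q with hu
      have hur : u * ((p:ℤ)*q + s) = z*p*q - j := by linear_combination heq
      refine ⟨x, y, z - u, δ, hx0, hxp, hy0, hyq, ?_, ?_, hd0, ?_⟩
      · nlinarith [hur, hz0, hj1, hS, hP, hQ]
      · nlinarith [hur, hzr, hj2, hS, hP, hQ]
      · linear_combination hur
    · rintro ⟨x, y, z, δ, hx0, hxp, hy0, hyq, hz0, hzs, hd0, heq⟩
      set t : ℤ := k - x*q - y*p - δ*p*q with ht
      have hts : t * (s:ℤ) = z*p*q - j := by linear_combination heq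
      have h1 : (z + t) * (s:ℤ) = z * s + z * p * q - j := by linear_combination hts
      have hs0 : (0:ℤ) < s := by linarith
      have hpq0 : (0:ℤ) ≤ (p:ℤ) * q := by positivity
      refine ⟨x, y, z + t, δ, hx0, hxp, hy0, hyq, ?_, ?_, hd0, ?_⟩
      · nlinarith [h1, mul_nonneg hz0 hs0.le, mul_nonneg hz0 hpq0, hj1]
      · nlinarith [h1, mul_nonneg (by linarith : (0:ℤ) ≤ (s:ℤ) - 1 - z) (by linarith : (0:ℤ) ≤ (s:ℤ) + (p:ℤ)*q), hj1, hP, hQ]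
      · linear_combination hts
  unfold chi
  rw [if_congr hiff rfl rfl]
end

section
/- (Lemma 10.) Let p, q, s be integers with 3 ≤ p < q and 3 ≤ s < q such that p, q, s are relatively prime in pairs, and set r = pq + s. Let χ = χ_{p,q,r}. Then for all integers k, j, β with |k| < pq, 0 < |j| < s, and |β| ≤ ⌊pq/s⌋, one has χ(kr + j + β·pq) = χ(kr + j). -/
open Classical

private lemma keyA (S R M j u : ℤ) (hS : 0 < S) (hRM : M * S + S ≤ R)
    (hj0 : 0 < |j|) (hjs : |j| < S) (hu : |u| ≤ M) (hd : R ∣ u * S + j) : False := by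
  have habs : |u * S + j| < R := by
    calc |u * S + j| ≤ |u * S| + |j| := abs_add_le _ _
      _ = |u| * S + |j| := by rw [abs_mul, abs_of_pos hS]
      _ < M * S + S := by nlinarith
      _ ≤ R := hRM
  have h0 : u * S + j = 0 := Int.eq_zero_of_abs_lt_dvd hd habs
  have hju : |j| = |u| * S := by
    have hj : j = -(u * S) := by linarith
    rw [hj, abs_neg, abs_mul, abs_of_pos hS]
  rcases eq_or_ne u 0 with h | h
  · rw [h] at hju; simp at hju; simp [hju] at hj0
  · have h1 : 1 ≤ |u| := Int.one_le_abs h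
    nlinarith

private lemma keyB (S R M j w : ℤ) (hS : 0 < S) (hRM : M * S + S ≤ R)
    (hj0 : 0 < |j|) (hjs : |j| < S)
    (hw1 : -M ≤ w) (hw2 : w ≤ R - 1 + M) (hd : R ∣ w * S + j) :
    M ≤ w ∧ w ≤ R - 1 - M := by
  constructor
  · by_contra h
    exact keyA S R M j w hS hRM hj0 hjs (abs_le.mpr ⟨hw1, by omega⟩) hd
  · by_contra h
    have hd' : R ∣ (w - R) * S + j := by
      have he : (w - R) * S + j = (w * S + j) + R * (-S) := by ring
      rw [he]; exact dvd_add hd (Dvd.intro _ rfl)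
    exact keyA S R M j (w - R) hS hRM hj0 hjs (abs_le.mpr ⟨by omega, by omega⟩) hd'

private lemma step (P Q S M k j γ γ' : ℤ) (hS : 0 < S)
    (hM0 : 0 ≤ M) (hMS : M * S ≤ P * Q)
    (hj0 : 0 < |j|) (hjs : |j| < S) (hγ : |γ| ≤ M) (hγ' : |γ'| ≤ M)
    (h : ∃ x y z δ : ℤ, 0 ≤ x ∧ x < P ∧ 0 ≤ y ∧ y < Q ∧ 0 ≤ z ∧ z < P * Q + S ∧ 0 ≤ δ ∧
      k * (P * Q + S) + j + γ * (P * Q) =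
        x * Q * (P * Q + S) + y * (P * Q + S) * P + z * P * Q + δ * P * Q * (P * Q + S)) :
    ∃ x y z δ : ℤ, 0 ≤ x ∧ x < P ∧ 0 ≤ y ∧ y < Q ∧ 0 ≤ z ∧ z < P * Q + S ∧ 0 ≤ δ ∧
      k * (P * Q + S) + j + γ' * (P * Q) =
        x * Q * (P * Q + S) + y * (P * Q + S) * P + z * P * Q + δ * P * Q * (P * Q + S) := by
  obtain ⟨x, y, z, δ, hx0, hx1, hy0, hy1, hz0, hz1, hδ, heq⟩ := h
  obtain ⟨hγ1, hγ2⟩ := abs_le.mp hγ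
  obtain ⟨hγ'1, hγ'2⟩ := abs_le.mp hγ'
  have hRM : M * S + S ≤ P * Q + S := by linarith
  have hd : (P * Q + S) ∣ (z - γ) * S + j :=
    ⟨x * Q + y * P + δ * P * Q + (z - γ) - k, by linear_combination heq⟩
  obtain ⟨hb1, hb2⟩ := keyB S (P * Q + S) M j (z - γ) hS hRM hj0 hjs
    (by linarith) (by linarith) hd
  exact ⟨x, y, z - γ + γ', δ, hx0, hx1, hy0, hy1, by linarith, by linarith, hδ,
    by linear_combination heq⟩

theorem stmt_18 (p q s : ℕ) (hp : 3 ≤ p) (hpq' : p < q) (hs : 3 ≤ s)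
    (hsq : s < q) (hpq : Nat.Coprime p q) (hqs : Nat.Coprime q s)
    (hsp : Nat.Coprime s p)
    (k j β : ℤ) (hk : |k| < (p : ℤ) * q) (hj0 : 0 < |j|) (hjs : |j| < (s : ℤ))
    (hβ : |β| ≤ ((p * q / s : ℕ) : ℤ)) :
    chi p q (p * q + s) (k * ((p : ℤ) * q + s) + j + β * (p * q)) =
      chi p q (p * q + s) (k * ((p : ℤ) * q + s) + j) := by
  have hS : (0 : ℤ) < (s : ℤ) := by exact_mod_cast Nat.lt_of_lt_of_le (by norm_num) hs
  have hM0 : (0 : ℤ) ≤ ((p * q / s : ℕ) : ℤ) := Int.natCast_nonneg _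
  have hMS : ((p * q / s : ℕ) : ℤ) * (s : ℤ) ≤ (p : ℤ) * q := by
    exact_mod_cast Nat.div_mul_le_self (p * q) s
  have h0 : |(0 : ℤ)| ≤ ((p * q / s : ℕ) : ℤ) := by simpa using hM0
  simp only [chi]
  refine if_congr ?_ rfl rfl
  push_cast
  constructor
  · intro h
    have := step (p : ℤ) q s ((p * q / s : ℕ) : ℤ) k j β 0 hS hM0 hMS hj0 hjs hβ h0 h
    simpa using this
  · intro h
    have h' : ∃ x y z δ : ℤ, 0 ≤ x ∧ x < (p : ℤ) ∧ 0 ≤ y ∧ y < (q : ℤ) ∧ 0 ≤ z ∧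
        z < (p : ℤ) * q + s ∧ 0 ≤ δ ∧
        k * ((p : ℤ) * q + s) + j + 0 * ((p : ℤ) * q) =
          x * q * ((p : ℤ) * q + s) + y * ((p : ℤ) * q + s) * p + z * p * q +
            δ * p * q * ((p : ℤ) * q + s) := by simpa using h
    exact step (p : ℤ) q s ((p * q / s : ℕ) : ℤ) k j 0 β hS hM0 hMS hj0 hjs h0 hβ h'
end
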